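/- arXiv:2104.10883 — 10 statements merged into one kernel-verified Lean document; each statement's English description precedes it below -/
import Mathlib

section
/- Let ε₁, ε₂ ∈ {1, −1}, let M, D, K ∈ ℂ^{n×n} satisfy M* = ε₁M, D* = ε₂D, K* = ε₁K, and let (X₁, Λ₁) ∈ ℂ^{n×p₁} × ℂ^{p₁×p₁} and (X₂, Λ₂) ∈ ℂ^{n×p₂} × ℂ^{p₂×p₂} be invariant pairs of Q(λ) = λ²M + λD + K, i.e. M Xⱼ Λⱼ² + D Xⱼ Λⱼ + K Xⱼ = 0 for j = 1, 2. Define S₁₂ := X₁* M X₂ Λ₂ + ε₁ε₂ Λ₁* X₁* M X₂ + X₁* D X₂ ∈ ℂ^{p₁×p₂}. Then S₁₂ Λ₂ = ε₁ε₂ Λ₁* S₁₂. -/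
open Matrix

/-- For invariant pairs `(X₁, Λ₁)`, `(X₂, Λ₂)` of a quadratic matrix
polynomial with `(*, ε₁, ε₂)`-structure, the matrix
`S₁₂ = X₁ᴴ M X₂ Λ₂ + ε₁ε₂ Λ₁ᴴ X₁ᴴ M X₂ + X₁ᴴ D X₂` satisfies
`S₁₂ Λ₂ = ε₁ε₂ Λ₁ᴴ S₁₂`. -/
theorem quadratic_star_structure_S12_intertwines
    {n p₁ p₂ : ℕ} (ε₁ ε₂ : ℂ) (hε₁ : ε₁ = 1 ∨ ε₁ = -1) (hε₂ : ε₂ = 1 ∨ ε₂ = -1)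
    (M D K : Matrix (Fin n) (Fin n) ℂ)
    (hM : Mᴴ = ε₁ • M) (hD : Dᴴ = ε₂ • D) (hK : Kᴴ = ε₁ • K)
    (X₁ : Matrix (Fin n) (Fin p₁) ℂ) (Λ₁ : Matrix (Fin p₁) (Fin p₁) ℂ)
    (X₂ : Matrix (Fin n) (Fin p₂) ℂ) (Λ₂ : Matrix (Fin p₂) (Fin p₂) ℂ)
    (h₁ : M * X₁ * Λ₁ ^ 2 + D * X₁ * Λ₁ + K * X₁ = 0)
    (h₂ : M * X₂ * Λ₂ ^ 2 + D * X₂ * Λ₂ + K * X₂ = 0)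
    (S₁₂ : Matrix (Fin p₁) (Fin p₂) ℂ)
    (hS : S₁₂ = X₁ᴴ * M * X₂ * Λ₂ + (ε₁ * ε₂) • (Λ₁ᴴ * (X₁ᴴ * M * X₂)) + X₁ᴴ * D * X₂) :
    S₁₂ * Λ₂ = (ε₁ * ε₂) • (Λ₁ᴴ * S₁₂) := by
  have he1 : ε₁ * ε₁ = 1 := by rcases hε₁ with h | h <;> simp [h]
  have he2 : ε₂ * ε₂ = 1 := by rcases hε₂ with h | h <;> simp [h]
  set A := X₁ᴴ * M * X₂ with hA
  set B := X₁ᴴ * D * X₂ with hB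
  set C := X₁ᴴ * K * X₂ with hC
  set e := ε₁ * ε₂ with he
  have hee : e * e = 1 := by
    calc e * e = (ε₁ * ε₁) * (ε₂ * ε₂) := by ring
    _ = 1 := by rw [he1, he2]; ring
  -- key2 : A * Λ₂ ^ 2 + B * Λ₂ + C = 0
  have key2 : A * Λ₂ ^ 2 + B * Λ₂ + C = 0 := by
    have := congrArg (fun Y => X₁ᴴ * Y) h₂
    simpa [hA, hB, hC, Matrix.mul_add, Matrix.mul_assoc] using this
  -- key1 : Λ₁ᴴ * Λ₁ᴴ * A + e • (Λ₁ᴴ * B) + C = 0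
  have key1 : Λ₁ᴴ * Λ₁ᴴ * A + e • (Λ₁ᴴ * B) + C = 0 := by
    have ht := congrArg (fun Y => ε₁ • (Yᴴ * X₂)) h₁
    simp only [conjTranspose_add, conjTranspose_mul, hM, hD, hK,
      Matrix.add_mul, Matrix.smul_mul, Matrix.mul_smul, smul_add, smul_smul,
      conjTranspose_pow, Matrix.zero_mul, smul_zero, conjTranspose_zero] at ht
    have h1 : ε₁ * ε₁ = (1 : ℂ) := he1
    rw [he1] at ht
    have : (Λ₁ᴴ) ^ 2 * (X₁ᴴ * (M * X₂)) + (ε₁ * ε₂) • (Λ₁ᴴ * (X₁ᴴ * (D * X₂)))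
        + X₁ᴴ * (K * X₂) = 0 := by
      simpa [one_smul, Matrix.mul_assoc, mul_comm ε₁ ε₂] using ht
    calc Λ₁ᴴ * Λ₁ᴴ * A + e • (Λ₁ᴴ * B) + C
        = (Λ₁ᴴ) ^ 2 * (X₁ᴴ * (M * X₂)) + (ε₁ * ε₂) • (Λ₁ᴴ * (X₁ᴴ * (D * X₂)))
          + X₁ᴴ * (K * X₂) := by
          simp [hA, hB, hC, pow_two, Matrix.mul_assoc, he]
    _ = 0 := this
  subst hS
  have expandL : (A * Λ₂ + e • (Λ₁ᴴ * A) + B) * Λ₂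
      = e • (Λ₁ᴴ * A * Λ₂) - C := by
    have : A * Λ₂ * Λ₂ + B * Λ₂ = -C := by
      have := key2
      rw [pow_two, ← Matrix.mul_assoc] at this
      linear_combination (norm := abel_nf) this
    calc (A * Λ₂ + e • (Λ₁ᴴ * A) + B) * Λ₂
        = (A * Λ₂ * Λ₂ + B * Λ₂) + e • (Λ₁ᴴ * A * Λ₂) := by
          simp [Matrix.add_mul, Matrix.smul_mul]; abel
    _ = e • (Λ₁ᴴ * A * Λ₂) - C := by rw [this]; abel
  have expandR : e • (Λ₁ᴴ * (A * Λ₂ + e • (Λ₁ᴴ * A) + B))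
      = e • (Λ₁ᴴ * A * Λ₂) - C := by
    have h' : Λ₁ᴴ * Λ₁ᴴ * A + e • (Λ₁ᴴ * B) = -C := by
      linear_combination (norm := abel_nf) key1
    calc e • (Λ₁ᴴ * (A * Λ₂ + e • (Λ₁ᴴ * A) + B))
        = e • (Λ₁ᴴ * A * Λ₂) + (e * e) • (Λ₁ᴴ * Λ₁ᴴ * A) + e • (Λ₁ᴴ * B) := by
          simp [Matrix.mul_add, Matrix.mul_smul, smul_add, smul_smul, Matrix.mul_assoc]
    _ = e • (Λ₁ᴴ * A * Λ₂) + (Λ₁ᴴ * Λ₁ᴴ * A + e • (Λ₁ᴴ * B)) := by rw [hee]; simp; abel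
    _ = e • (Λ₁ᴴ * A * Λ₂) - C := by rw [h']; abel
  rw [expandL, expandR]
end

section
/- Let ε₁, ε₂ ∈ {1, −1}, let M, D, K ∈ ℂ^{n×n} satisfy M* = ε₁M, D* = ε₂D, K* = ε₁K, and let (X₁, Λ₁) ∈ ℂ^{n×p₁} × ℂ^{p₁×p₁} and (X₂, Λ₂) ∈ ℂ^{n×p₂} × ℂ^{p₂×p₂} be invariant pairs of Q(λ) = λ²M + λD + K. If the spectra of ε₁ε₂ Λ₁* and of Λ₂ are disjoint (no μ ∈ ℂ is an eigenvalue of both matrices), then S₁₂ := X₁* M X₂ Λ₂ + ε₁ε₂ Λ₁* X₁* M X₂ + X₁* D X₂ = 0. -/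
open Matrix Polynomial

lemma my_eval_charpoly {p : ℕ} (A : Matrix (Fin p) (Fin p) ℂ) (r : ℂ) :
    A.charpoly.eval r = (r • (1 : Matrix (Fin p) (Fin p) ℂ) - A).det := by
  rw [Matrix.charpoly, _root_.eval_det, matPolyEquiv_charmatrix]
  congr 1
  simp only [eval_sub, eval_X, eval_C, Matrix.scalar_apply]
  congr 1
  ext i j
  by_cases h : i = j <;> simp [Matrix.diagonal_apply, Matrix.one_apply, h]

/-- Uniqueness for the Sylvester equation: if `A * S = S * B` and the spectra of
`A` and `B` are disjoint, then `S = 0`. -/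
lemma my_sylvester {p q : ℕ} (A : Matrix (Fin p) (Fin p) ℂ) (B : Matrix (Fin q) (Fin q) ℂ)
    (S : Matrix (Fin p) (Fin q) ℂ) (hAB : A * S = S * B)
    (hdisj : ∀ μ : ℂ, ¬ ((μ • (1 : Matrix (Fin p) (Fin p) ℂ) - A).det = 0 ∧
      (μ • (1 : Matrix (Fin q) (Fin q) ℂ) - B).det = 0)) : S = 0 := by
  have hpow : ∀ k : ℕ, A ^ k * S = S * B ^ k := by
    intro k; induction k with
    | zero => simp
    | succ k ih => rw [pow_succ, pow_succ, Matrix.mul_assoc, hAB, ← Matrix.mul_assoc, ih,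
        Matrix.mul_assoc]
  have haeval : ∀ f : Polynomial ℂ, (aeval A f) * S = S * aeval B f := by
    intro f
    induction f using Polynomial.induction_on' with
    | add f g hf hg => rw [map_add, map_add, Matrix.add_mul, Matrix.mul_add, hf, hg]
    | monomial k c =>
      simp only [aeval_monomial, Algebra.algebraMap_eq_smul_one, smul_mul_assoc, one_mul]
      rw [Matrix.smul_mul, Matrix.mul_smul, hpow k]
  have h0 : S * aeval B A.charpoly = 0 := by
    rw [← haeval, Matrix.aeval_self_charpoly]; simp
  set f := A.charpoly with hfdef
  set l : List ℂ := f.roots.toList with hl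
  have hf : f = (l.map (fun r => X - C r)).prod := by
    have h1 : f = (f.roots.map (fun r => X - C r)).prod :=
      (IsAlgClosed.splits _).eq_prod_roots_of_monic A.charpoly_monic
    rw [h1, ← Multiset.coe_toList f.roots, Multiset.map_coe, Multiset.prod_coe]
  have heval : aeval B f = (l.map (fun r => B - r • 1)).prod := by
    conv_lhs => rw [hf]
    rw [map_list_prod, List.map_map]
    congr 1
    ext r
    simp [Algebra.algebraMap_eq_smul_one]
  have hdet : (aeval B f).det ≠ 0 := by
    have hd : ((l.map (fun r => B - r • 1)).prod).det
        = ((l.map (fun r => B - r • 1)).map Matrix.det).prod := by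
      simpa using map_list_prod (Matrix.detMonoidHom (n := Fin q) (R := ℂ)) (l.map (fun r => B - r • 1))
    rw [heval, hd, List.map_map]
    apply List.prod_ne_zero
    intro h0'
    rw [List.mem_map] at h0'
    obtain ⟨r, hr, hrd⟩ := h0'
    have hrm : r ∈ f.roots := by rw [← Multiset.mem_toList]; exact hr
    have hroot : f.eval r = 0 := (Polynomial.mem_roots (A.charpoly_monic.ne_zero)).1 hrm
    rw [hfdef, my_eval_charpoly] at hroot
    have hB : (r • (1 : Matrix (Fin q) (Fin q) ℂ) - B).det ≠ 0 := fun h => hdisj r ⟨hroot, h⟩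
    apply hB
    have he : (B - r • 1 : Matrix (Fin q) (Fin q) ℂ) = -(r • 1 - B) := (neg_sub _ _).symm
    simp only [Function.comp] at hrd
    rw [he, Matrix.det_neg] at hrd
    simpa using hrd
  have hu : IsUnit (aeval B f).det := isUnit_iff_ne_zero.2 hdet
  calc S = S * ((aeval B f) * (aeval B f)⁻¹) := by
        rw [Matrix.mul_nonsing_inv _ hu, Matrix.mul_one]
    _ = (S * aeval B f) * (aeval B f)⁻¹ := by rw [Matrix.mul_assoc]
    _ = 0 := by rw [h0, Matrix.zero_mul]

/-- The key algebraic identity: `S₁₂` intertwines `c • A` and `B`. -/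
lemma my_key_aux {p q : ℕ} (c : ℂ) (hc : c = 1 ∨ c = -1)
    (G H L : Matrix (Fin p) (Fin q) ℂ) (A : Matrix (Fin p) (Fin p) ℂ) (B : Matrix (Fin q) (Fin q) ℂ)
    (e1 : G * B ^ 2 + H * B + L = 0) (e2 : A ^ 2 * G + c • (A * H) + L = 0) :
    (c • A) * (G * B + c • (A * G) + H) = (G * B + c • (A * G) + H) * B := by
  have h1 : G * B ^ 2 + H * B = -L := eq_neg_of_add_eq_zero_left e1
  rcases hc with rfl | rfl
  · simp only [one_smul] at e2 ⊢
    have h2 : A ^ 2 * G + A * H = -L := eq_neg_of_add_eq_zero_left e2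
    calc A * (G * B + A * G + H) = A * (G * B) + (A ^ 2 * G + A * H) := by
          simp only [Matrix.mul_add, pow_two, Matrix.mul_assoc]; abel
      _ = A * (G * B) + (G * B ^ 2 + H * B) := by rw [h2, h1]
      _ = (G * B + A * G + H) * B := by
          simp only [Matrix.add_mul, pow_two, Matrix.mul_assoc]; abel
  · simp only [neg_smul, one_smul, neg_one_smul] at e2 ⊢
    have h2 : A ^ 2 * G + -(A * H) = -L := eq_neg_of_add_eq_zero_left e2
    calc -A * (G * B + -(A * G) + H) = A ^ 2 * G + -(A * H) + -(A * (G * B)) := by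
          simp only [Matrix.mul_add, Matrix.neg_mul, Matrix.mul_neg, pow_two, Matrix.mul_assoc]
          abel
      _ = G * B ^ 2 + H * B + -(A * (G * B)) := by rw [h2, h1]
      _ = (G * B + -(A * G) + H) * B := by
          simp only [Matrix.add_mul, Matrix.neg_mul, pow_two, Matrix.mul_assoc]; abel

/-- For invariant pairs `(X₁, Λ₁)`, `(X₂, Λ₂)` of a quadratic matrix
polynomial with `(*, ε₁, ε₂)`-structure, if the spectra of `ε₁ε₂ Λ₁ᴴ` and `Λ₂`
are disjoint, then `S₁₂ = X₁ᴴ M X₂ Λ₂ + ε₁ε₂ Λ₁ᴴ X₁ᴴ M X₂ + X₁ᴴ D X₂ = 0`. -/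
theorem quadratic_star_structure_S12_eq_zero
    {n p₁ p₂ : ℕ} (ε₁ ε₂ : ℂ) (hε₁ : ε₁ = 1 ∨ ε₁ = -1) (hε₂ : ε₂ = 1 ∨ ε₂ = -1)
    (M D K : Matrix (Fin n) (Fin n) ℂ)
    (hM : Mᴴ = ε₁ • M) (hD : Dᴴ = ε₂ • D) (hK : Kᴴ = ε₁ • K)
    (X₁ : Matrix (Fin n) (Fin p₁) ℂ) (Λ₁ : Matrix (Fin p₁) (Fin p₁) ℂ)
    (X₂ : Matrix (Fin n) (Fin p₂) ℂ) (Λ₂ : Matrix (Fin p₂) (Fin p₂) ℂ)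
    (h₁ : M * X₁ * Λ₁ ^ 2 + D * X₁ * Λ₁ + K * X₁ = 0)
    (h₂ : M * X₂ * Λ₂ ^ 2 + D * X₂ * Λ₂ + K * X₂ = 0)
    (hdisj : ∀ μ : ℂ, ¬ ((μ • (1 : Matrix (Fin p₁) (Fin p₁) ℂ) - (ε₁ * ε₂) • Λ₁ᴴ).det = 0 ∧
      (μ • (1 : Matrix (Fin p₂) (Fin p₂) ℂ) - Λ₂).det = 0)) :
    X₁ᴴ * M * X₂ * Λ₂ + (ε₁ * ε₂) • (Λ₁ᴴ * (X₁ᴴ * M * X₂)) + X₁ᴴ * D * X₂ = 0 := by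
  have h11 : ε₁ * ε₁ = 1 := by rcases hε₁ with rfl | rfl <;> norm_num
  have hc : ε₁ * ε₂ = 1 ∨ ε₁ * ε₂ = -1 := by
    rcases hε₁ with rfl | rfl <;> rcases hε₂ with rfl | rfl <;> norm_num
  have e1 : (X₁ᴴ * M * X₂) * Λ₂ ^ 2 + (X₁ᴴ * D * X₂) * Λ₂ + X₁ᴴ * K * X₂ = 0 := by
    have h := congrArg (fun Y => X₁ᴴ * Y) h₂
    simpa only [Matrix.mul_add, Matrix.mul_zero, ← Matrix.mul_assoc] using h
  have e2 : Λ₁ᴴ ^ 2 * (X₁ᴴ * M * X₂) + (ε₁ * ε₂) • (Λ₁ᴴ * (X₁ᴴ * D * X₂))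
      + X₁ᴴ * K * X₂ = 0 := by
    have h := congrArg (fun Y => ε₁ • (Yᴴ * X₂)) h₁
    simp only [conjTranspose_add, conjTranspose_mul, conjTranspose_pow, hM, hD, hK,
      Matrix.add_mul, Matrix.smul_mul, Matrix.mul_smul, smul_add, smul_smul,
      ← Matrix.mul_assoc, conjTranspose_zero, Matrix.zero_mul, smul_zero] at h
    rw [h11, one_smul, one_smul] at h
    simpa only [← Matrix.mul_assoc] using h
  have key := my_key_aux (ε₁ * ε₂) hc (X₁ᴴ * M * X₂) (X₁ᴴ * D * X₂) (X₁ᴴ * K * X₂)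
    Λ₁ᴴ Λ₂ e1 e2
  have key' : ((ε₁ * ε₂) • Λ₁ᴴ) * (X₁ᴴ * M * X₂ * Λ₂ + (ε₁ * ε₂) • (Λ₁ᴴ * (X₁ᴴ * M * X₂))
      + X₁ᴴ * D * X₂)
      = (X₁ᴴ * M * X₂ * Λ₂ + (ε₁ * ε₂) • (Λ₁ᴴ * (X₁ᴴ * M * X₂)) + X₁ᴴ * D * X₂) * Λ₂ := key
  exact my_sylvester ((ε₁ * ε₂) • Λ₁ᴴ) Λ₂ _ key' hdisj
end

section
/- Let ε₁, ε₂ ∈ {1, −1}, let M, D, K ∈ ℂ^{n×n} satisfy M* = ε₁M, D* = ε₂D, K* = ε₁K, and let (X, Λ) ∈ ℂ^{n×p} × ℂ^{p×p} be an invariant pair of Q(λ) = λ²M + λD + K. Define S := X* M X Λ + ε₁ε₂ Λ* X* M X + X* D X. Then S* = ε₂ S, S Λ = ε₁ε₂ Λ* S, and consequently S Λ = ε₁ (S Λ)*. -/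
open Matrix

/-- For an invariant pair `(X, Λ)` of a quadratic matrix polynomial with
`(*, ε₁, ε₂)`-structure, `S = Xᴴ M X Λ + ε₁ε₂ Λᴴ Xᴴ M X + Xᴴ D X` satisfies
`Sᴴ = ε₂ S`, `S Λ = ε₁ε₂ Λᴴ S` and `S Λ = ε₁ (S Λ)ᴴ`. -/
theorem quadratic_star_structure_S_symmetry
    {n p : ℕ} (ε₁ ε₂ : ℂ) (hε₁ : ε₁ = 1 ∨ ε₁ = -1) (hε₂ : ε₂ = 1 ∨ ε₂ = -1)
    (M D K : Matrix (Fin n) (Fin n) ℂ)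
    (hM : Mᴴ = ε₁ • M) (hD : Dᴴ = ε₂ • D) (hK : Kᴴ = ε₁ • K)
    (X : Matrix (Fin n) (Fin p) ℂ) (Λ : Matrix (Fin p) (Fin p) ℂ)
    (h : M * X * Λ ^ 2 + D * X * Λ + K * X = 0)
    (S : Matrix (Fin p) (Fin p) ℂ)
    (hS : S = Xᴴ * M * X * Λ + (ε₁ * ε₂) • (Λᴴ * (Xᴴ * M * X)) + Xᴴ * D * X) :
    Sᴴ = ε₂ • S ∧ S * Λ = (ε₁ * ε₂) • (Λᴴ * S) ∧ S * Λ = ε₁ • (S * Λ)ᴴ := by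
  have hε₁sq : ε₁ * ε₁ = 1 := by rcases hε₁ with rfl | rfl <;> norm_num
  have hε₂sq : ε₂ * ε₂ = 1 := by rcases hε₂ with rfl | rfl <;> norm_num
  have hstar₁ : star ε₁ = ε₁ := by rcases hε₁ with rfl | rfl <;> norm_num
  have hstar₂ : star ε₂ = ε₂ := by rcases hε₂ with rfl | rfl <;> norm_num
  have hinv : Xᴴ * M * X * (Λ * Λ) + Xᴴ * D * X * Λ + Xᴴ * K * X = 0 := by
    have h2 := congrArg (fun Y => Xᴴ * Y) h
    simpa [Matrix.mul_add, Matrix.mul_assoc, sq] using h2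
  have hinv2 : ε₁ • (Λᴴ * (Λᴴ * (Xᴴ * (M * X)))) + ε₂ • (Λᴴ * (Xᴴ * (D * X)))
      + ε₁ • (Xᴴ * (K * X)) = 0 := by
    have h2 := congrArg conjTranspose hinv
    simpa [conjTranspose_mul, hM, hD, hK, Matrix.mul_smul, Matrix.smul_mul,
      Matrix.mul_assoc] using h2
  have g1 : Sᴴ = ε₂ • S := by
    rw [hS]
    simp only [conjTranspose_add, conjTranspose_smul, conjTranspose_mul,
      conjTranspose_conjTranspose, star_mul', hstar₁, hstar₂, hM, hD,
      Matrix.mul_smul, Matrix.smul_mul, smul_add, smul_smul, Matrix.mul_assoc,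
      Matrix.add_mul, Matrix.mul_add]
    match_scalars <;>
      (rcases hε₁ with rfl | rfl <;> rcases hε₂ with rfl | rfl <;> norm_num)
  have g2 : S * Λ = (ε₁ * ε₂) • (Λᴴ * S) := by
    have e : S * Λ - (ε₁ * ε₂) • (Λᴴ * S) =
        (Xᴴ * M * X * (Λ * Λ) + Xᴴ * D * X * Λ + Xᴴ * K * X)
        - ε₁ • (ε₁ • (Λᴴ * (Λᴴ * (Xᴴ * (M * X)))) + ε₂ • (Λᴴ * (Xᴴ * (D * X)))
          + ε₁ • (Xᴴ * (K * X))) := by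
      rw [hS]
      simp only [Matrix.add_mul, Matrix.mul_add, Matrix.smul_mul, Matrix.mul_smul,
        smul_add, smul_smul, Matrix.mul_assoc, sub_eq_add_neg, neg_add, smul_neg]
      match_scalars <;>
        (rcases hε₁ with rfl | rfl <;> rcases hε₂ with rfl | rfl <;> norm_num)
    rw [hinv, hinv2, smul_zero, sub_zero, sub_eq_zero] at e
    exact e
  refine ⟨g1, g2, ?_⟩
  rw [conjTranspose_mul, g1, Matrix.mul_smul, smul_smul, mul_comm ε₁ ε₂, g2,
    mul_comm ε₂ ε₁]
end

section
/- Let ε₁, ε₂ ∈ {1, −1}, let M, D, K ∈ ℂ^{n×n} satisfy M* = ε₁M, D* = ε₂D, K* = ε₁K, and let (X, Λ) ∈ ℂ^{n×p} × ℂ^{p×p} be an invariant pair of Q(λ) = λ²M + λD + K. If the spectra of ε₁ε₂ Λ* and of Λ are disjoint, then X* M X Λ + ε₁ε₂ Λ* X* M X + X* D X = 0. -/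
/-!
Write `A = Xᴴ M X`, `B = Xᴴ D X`, `C = Xᴴ K X` and `T = ε₁ε₂ Λᴴ`. Multiplying the invariant-pair
equation by `Xᴴ` on the left shows `A Λ² + B Λ + C = 0`; taking its conjugate transpose and using
the structure shows `T² A + T B + C = 0`. Subtracting, `S = A Λ + T A + B` satisfies the Sylvester
equation `T S = S Λ`, whose only solution is `S = 0` when `T` and `Λ` have disjoint spectra:
`q(T) S = S q(Λ) = 0` for the characteristic polynomial `q` of `Λ`, and `q(T)` is invertible by the
spectral mapping theorem.
-/

open Matrix Polynomial

theorem intertwining_of_right_solvent_of_left_solvent {R : Type*} [Ring R] {a b c l t : R}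
    (hl : a * l ^ 2 + b * l + c = 0) (ht : t ^ 2 * a + t * b + c = 0) :
    t * (a * l + t * a + b) = (a * l + t * a + b) * l := by
  have hquad : t ^ 2 * a + t * b = a * l ^ 2 + b * l := by
    rw [eq_neg_of_add_eq_zero_left ht, eq_neg_of_add_eq_zero_left hl]
  calc t * (a * l + t * a + b) = t * a * l + (t ^ 2 * a + t * b) := by noncomm_ring
    _ = t * a * l + (a * l ^ 2 + b * l) := by rw [hquad]
    _ = (a * l + t * a + b) * l := by noncomm_ring

namespace Matrix

section Sylvester

variable {m n : Type*} [Fintype m] [DecidableEq m] [Fintype n] [DecidableEq n]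

theorem mem_spectrum_iff_det_smul_one_sub_eq_zero {K : Type*} [Field K] {A : Matrix n n K}
    {μ : K} : μ ∈ spectrum K A ↔ (μ • (1 : Matrix n n K) - A).det = 0 := by
  rw [mem_spectrum_iff_isRoot_charpoly, IsRoot.def, eval_charpoly, smul_one_eq_diagonal]
  rfl

theorem pow_mul_eq_mul_pow_of_mul_eq_mul {R : Type*} [Semiring R] {A : Matrix m m R}
    {B : Matrix n n R} {S : Matrix m n R} (hS : A * S = S * B) (k : ℕ) :
    A ^ k * S = S * B ^ k := by
  induction k with
  | zero => simp
  | succ k ih =>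
    rw [pow_succ, pow_succ, Matrix.mul_assoc, hS, ← Matrix.mul_assoc, ih, Matrix.mul_assoc]

theorem aeval_mul_eq_mul_aeval_of_mul_eq_mul {R : Type*} [CommSemiring R] {A : Matrix m m R}
    {B : Matrix n n R} {S : Matrix m n R} (hS : A * S = S * B) (q : R[X]) :
    aeval A q * S = S * aeval B q := by
  simp only [aeval_eq_sum_range, Matrix.sum_mul, Matrix.mul_sum, Matrix.smul_mul, Matrix.mul_smul,
    pow_mul_eq_mul_pow_of_mul_eq_mul hS]

theorem eq_zero_of_mul_eq_mul_of_disjoint_spectrum {K : Type*} [Field K] [IsAlgClosed K]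
    {A : Matrix m m K} {B : Matrix n n K} {S : Matrix m n K}
    (hAB : Disjoint (spectrum K A) (spectrum K B)) (hS : A * S = S * B) : S = 0 := by
  cases isEmpty_or_nonempty n
  · exact Subsingleton.elim _ _
  have hdeg : 0 < B.charpoly.degree := by
    rw [charpoly_degree_eq_dim]
    exact_mod_cast Fintype.card_pos
  have hunit : IsUnit (aeval A B.charpoly) := by
    rw [← not_not (a := IsUnit _), ← spectrum.zero_mem_iff K,
      spectrum.map_polynomial_aeval_of_degree_pos A _ hdeg]
    rintro ⟨μ, hμA, hμB⟩
    exact Set.disjoint_left.1 hAB hμA (mem_spectrum_iff_isRoot_charpoly.2 hμB)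
  have hcancel := nonsing_inv_mul_cancel_left _ S ((isUnit_iff_isUnit_det _).1 hunit)
  rwa [aeval_mul_eq_mul_aeval_of_mul_eq_mul hS, aeval_self_charpoly, Matrix.mul_zero,
    Matrix.mul_zero, eq_comm] at hcancel

end Sylvester

theorem conjTranspose_mul_mul_quadratic_eq_zero {R : Type*} [CommRing R] [StarRing R]
    {n p : Type*} [Fintype n] [Fintype p] [DecidableEq p] {M D K : Matrix n n R}
    {X : Matrix n p R} {Λ : Matrix p p R} (h : M * X * Λ ^ 2 + D * X * Λ + K * X = 0) :
    Xᴴ * M * X * Λ ^ 2 + Xᴴ * D * X * Λ + Xᴴ * K * X = 0 := by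
  simpa only [Matrix.mul_add, Matrix.mul_zero, Matrix.mul_assoc] using congrArg (Xᴴ * ·) h

theorem quadratic_mul_conjTranspose_mul_eq_zero {R : Type*} [CommRing R] [StarRing R]
    {n p : Type*} [Fintype n] [Fintype p] [DecidableEq p] {ε₁ ε₂ : R} (hε₁ : ε₁ * ε₁ = 1)
    (hε₂ : ε₂ * ε₂ = 1) {M D K : Matrix n n R} (hM : Mᴴ = ε₁ • M) (hD : Dᴴ = ε₂ • D)
    (hK : Kᴴ = ε₁ • K) {X : Matrix n p R} {Λ : Matrix p p R}
    (h : M * X * Λ ^ 2 + D * X * Λ + K * X = 0) :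
    ((ε₁ * ε₂) • Λᴴ) ^ 2 * (Xᴴ * M * X) + (ε₁ * ε₂) • Λᴴ * (Xᴴ * D * X) + Xᴴ * K * X = 0 := by
  have hstar : ε₁ • Λᴴ ^ 2 * (Xᴴ * M * X) + ε₂ • Λᴴ * (Xᴴ * D * X) + ε₁ • (Xᴴ * K * X) = 0 := by
    simpa [conjTranspose_pow, hM, hD, hK, Matrix.add_mul, Matrix.mul_assoc] using
      congrArg (·ᴴ * X) h
  have hε : (ε₁ * ε₂) ^ 2 = 1 := by rw [mul_pow, sq, sq, hε₁, hε₂, one_mul]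
  calc _ = ε₁ • (ε₁ • Λᴴ ^ 2 * (Xᴴ * M * X) + ε₂ • Λᴴ * (Xᴴ * D * X) + ε₁ • (Xᴴ * K * X)) := by
        simp only [_root_.smul_pow, hε, smul_add, smul_smul, smul_mul_assoc, hε₁, one_smul]
    _ = 0 := by rw [hstar, smul_zero]

end Matrix

/-- For an invariant pair `(X, Λ)` of a quadratic matrix polynomial with
`(*, ε₁, ε₂)`-structure, if the spectra of `ε₁ε₂ Λᴴ` and `Λ` are disjoint then
`Xᴴ M X Λ + ε₁ε₂ Λᴴ Xᴴ M X + Xᴴ D X = 0`. -/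
theorem quadratic_star_structure_S_eq_zero
    {n p : ℕ} (ε₁ ε₂ : ℂ) (hε₁ : ε₁ = 1 ∨ ε₁ = -1) (hε₂ : ε₂ = 1 ∨ ε₂ = -1)
    (M D K : Matrix (Fin n) (Fin n) ℂ)
    (hM : Mᴴ = ε₁ • M) (hD : Dᴴ = ε₂ • D) (hK : Kᴴ = ε₁ • K)
    (X : Matrix (Fin n) (Fin p) ℂ) (Λ : Matrix (Fin p) (Fin p) ℂ)
    (h : M * X * Λ ^ 2 + D * X * Λ + K * X = 0)
    (hdisj : ∀ μ : ℂ, ¬ ((μ • (1 : Matrix (Fin p) (Fin p) ℂ) - (ε₁ * ε₂) • Λᴴ).det = 0 ∧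
      (μ • (1 : Matrix (Fin p) (Fin p) ℂ) - Λ).det = 0)) :
    Xᴴ * M * X * Λ + (ε₁ * ε₂) • (Λᴴ * (Xᴴ * M * X)) + Xᴴ * D * X = 0 := by
  have hε₁_sq : ε₁ * ε₁ = 1 := by rcases hε₁ with rfl | rfl <;> norm_num
  have hε₂_sq : ε₂ * ε₂ = 1 := by rcases hε₂ with rfl | rfl <;> norm_num
  have hspec : Disjoint (spectrum ℂ ((ε₁ * ε₂) • Λᴴ)) (spectrum ℂ Λ) :=
    Set.disjoint_left.2 fun μ hT hΛ => hdisj μ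
      ⟨mem_spectrum_iff_det_smul_one_sub_eq_zero.1 hT,
        mem_spectrum_iff_det_smul_one_sub_eq_zero.1 hΛ⟩
  rw [← smul_mul_assoc]
  exact eq_zero_of_mul_eq_mul_of_disjoint_spectrum hspec
    (intertwining_of_right_solvent_of_left_solvent (conjTranspose_mul_mul_quadratic_eq_zero h)
      (quadratic_mul_conjTranspose_mul_eq_zero hε₁_sq hε₂_sq hM hD hK h))
end

section
/- Let ε₁, ε₂ ∈ {1, −1}, let M, D, K ∈ ℂ^{n×n} satisfy M* = ε₁M, D* = ε₂D, K* = ε₁K, and let (λ₁, x₁) and (λ₂, x₂) be eigenpairs of Q(λ) = λ²M + λD + K (that is, (λⱼ²M + λⱼD + K)xⱼ = 0 with xⱼ ∈ ℂⁿ nonzero). If λ₂ ≠ ε₁ε₂·conj(λ₁), then λ₂·(x₁* M x₂) + ε₁ε₂·conj(λ₁)·(x₁* M x₂) + x₁* D x₂ = 0. -/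
/-!
Pair `Q(λ₂) x₂ = 0` with `x₁*` and `x₁* Q(λ₁)* = 0` with `x₂`. Since `ε₁² = ε₂² = 1`, the
structure gives `Q(λ₁)* = ε₁ Q(ν)` with `ν = ε₁ε₂ conj λ₁`, so `x₁* Q(λ₂) x₂` and `x₁* Q(ν) x₂`
both vanish; their difference is `(λ₂ - ν) ((λ₂ + ν) x₁*Mx₂ + x₁*Dx₂)`, and `λ₂ ≠ ν` cancels
the first factor.
-/

open Matrix

namespace Matrix

variable {ι R : Type*}

theorem star_dotProduct_conjTranspose_mulVec_eq_zero [Fintype ι] [NonUnitalSemiring R]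
    [StarRing R] {A : Matrix ι ι R} {x : ι → R} (hx : A *ᵥ x = 0) (y : ι → R) :
    star x ⬝ᵥ Aᴴ *ᵥ y = 0 := by
  rw [dotProduct_mulVec, ← star_mulVec, hx, star_zero, zero_dotProduct]

theorem dotProduct_quadratic_mulVec [Fintype ι] [CommSemiring R] (M D K : Matrix ι ι R) (a : R)
    (u v : ι → R) :
    u ⬝ᵥ (a ^ 2 • M + a • D + K) *ᵥ v
      = a ^ 2 * (u ⬝ᵥ M *ᵥ v) + a * (u ⬝ᵥ D *ᵥ v) + u ⬝ᵥ K *ᵥ v := by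
  simp only [add_mulVec, smul_mulVec, dotProduct_add, dotProduct_smul, smul_eq_mul]

theorem conjTranspose_quadratic [CommSemiring R] [StarRing R] (M D K : Matrix ι ι R) (a : R) :
    (a ^ 2 • M + a • D + K)ᴴ = star a ^ 2 • Mᴴ + star a • Dᴴ + Kᴴ := by
  simp only [conjTranspose_add, conjTranspose_smul, star_pow]

end Matrix

theorem mul_add_mul_add_eq_zero_of_quadratics {F : Type*} [Field F] {ε₁ ε₂ a μ m d k : F}
    (hε₁ : ε₁ ^ 2 = 1) (hε₂ : ε₂ ^ 2 = 1)
    (ha : a ^ 2 * m + a * d + k = 0) (hμ : μ ^ 2 * (ε₁ * m) + μ * (ε₂ * d) + ε₁ * k = 0)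
    (hne : a ≠ ε₁ * ε₂ * μ) :
    a * m + ε₁ * ε₂ * μ * m + d = 0 := by
  have hε₁ne : ε₁ ≠ 0 := by rintro rfl; norm_num at hε₁
  have key : ε₁ * (a - ε₁ * ε₂ * μ) * (a * m + ε₁ * ε₂ * μ * m + d) = 0 := by
    linear_combination ε₁ * ha - hμ + (-ε₁ * m * μ ^ 2 * ε₂ ^ 2 - ε₂ * μ * d) * hε₁
      - ε₁ * m * μ ^ 2 * hε₂
  simpa [hε₁ne, sub_ne_zero.mpr hne] using key

theorem quadratic_star_structure_eigvec_orthogonality_general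
    {n : ℕ} (ε₁ ε₂ : ℂ) (hε₁ : ε₁ = 1 ∨ ε₁ = -1) (hε₂ : ε₂ = 1 ∨ ε₂ = -1)
    (M D K : Matrix (Fin n) (Fin n) ℂ)
    (hM : Mᴴ = ε₁ • M) (hD : Dᴴ = ε₂ • D) (hK : Kᴴ = ε₁ • K)
    (lam₁ lam₂ : ℂ) (x₁ x₂ : Fin n → ℂ)
    (h₁ : (lam₁ ^ 2 • M + lam₁ • D + K).mulVec x₁ = 0)
    (h₂ : (lam₂ ^ 2 • M + lam₂ • D + K).mulVec x₂ = 0)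
    (hne : lam₂ ≠ ε₁ * ε₂ * (starRingEnd ℂ) lam₁) :
    lam₂ * (star x₁ ⬝ᵥ M.mulVec x₂) + ε₁ * ε₂ * (starRingEnd ℂ) lam₁ * (star x₁ ⬝ᵥ M.mulVec x₂)
      + star x₁ ⬝ᵥ D.mulVec x₂ = 0 := by
  have hsq : ∀ ε : ℂ, ε = 1 ∨ ε = -1 → ε ^ 2 = 1 := by rintro ε (rfl | rfl) <;> norm_num
  have hQ₂ := congrArg (star x₁ ⬝ᵥ ·) h₂
  have hQ₁ := star_dotProduct_conjTranspose_mulVec_eq_zero h₁ x₂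
  simp only [dotProduct_zero, dotProduct_quadratic_mulVec] at hQ₂
  rw [conjTranspose_quadratic, hM, hD, hK, dotProduct_quadratic_mulVec] at hQ₁
  simp only [smul_mulVec, dotProduct_smul, smul_eq_mul] at hQ₁
  exact mul_add_mul_add_eq_zero_of_quadratics (hsq ε₁ hε₁) (hsq ε₂ hε₂) hQ₂ hQ₁ hne

/-- For eigenpairs `(λ₁, x₁)` and `(λ₂, x₂)` of a quadratic matrix
polynomial with `(*, ε₁, ε₂)`-structure, if `λ₂ ≠ ε₁ε₂·conj(λ₁)` then
`λ₂ x₁ᴴ M x₂ + ε₁ε₂ conj(λ₁) x₁ᴴ M x₂ + x₁ᴴ D x₂ = 0`. -/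
theorem quadratic_star_structure_eigvec_orthogonality
    {n : ℕ} (ε₁ ε₂ : ℂ) (hε₁ : ε₁ = 1 ∨ ε₁ = -1) (hε₂ : ε₂ = 1 ∨ ε₂ = -1)
    (M D K : Matrix (Fin n) (Fin n) ℂ)
    (hM : Mᴴ = ε₁ • M) (hD : Dᴴ = ε₂ • D) (hK : Kᴴ = ε₁ • K)
    (lam₁ lam₂ : ℂ) (x₁ x₂ : Fin n → ℂ) (hx₁ : x₁ ≠ 0) (hx₂ : x₂ ≠ 0)
    (h₁ : (lam₁ ^ 2 • M + lam₁ • D + K).mulVec x₁ = 0)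
    (h₂ : (lam₂ ^ 2 • M + lam₂ • D + K).mulVec x₂ = 0)
    (hne : lam₂ ≠ ε₁ * ε₂ * (starRingEnd ℂ) lam₁) :
    lam₂ * (star x₁ ⬝ᵥ M.mulVec x₂) + ε₁ * ε₂ * (starRingEnd ℂ) lam₁ * (star x₁ ⬝ᵥ M.mulVec x₂)
      + star x₁ ⬝ᵥ D.mulVec x₂ = 0 :=
  quadratic_star_structure_eigvec_orthogonality_general ε₁ ε₂ hε₁ hε₂ M D K hM hD hK lam₁ lam₂ x₁ x₂
    h₁ h₂ hne
end

section
/- Let ε₁, ε₂ ∈ {1, −1}, let M, D, K ∈ ℂ^{n×n} satisfy M* = ε₁M, D* = ε₂D, K* = ε₁K, and let (λ₀, x₀) and (ε₁ε₂·conj(λ₀), x̃₀) be eigenpairs of Q(λ) = λ²M + λD + K with λ₀ ≠ ε₁ε₂·conj(λ₀). Set X₀ := [x₀ x̃₀] ∈ ℂ^{n×2}, Λ₀ := diag(λ₀, ε₁ε₂·conj(λ₀)), and s₀ := 2ε₁ε₂·conj(λ₀)·(x₀* M x̃₀) + x₀* D x̃₀ ∈ ℂ. Then X₀* M X₀ Λ₀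 + ε₁ε₂ Λ₀* X₀* M X₀ + X₀* D X₀ equals the 2×2 matrix with (1,1) and (2,2) entries 0, (1,2) entry s₀, and (2,1) entry ε₂·conj(s₀). -/
open Matrix

private theorem quad_key {n : ℕ} (M : Matrix (Fin n) (Fin n) ℂ) (ε : ℂ) (hM : Mᴴ = ε • M)
  (u v : Fin n → ℂ) :
    (starRingEnd ℂ) (star u ⬝ᵥ M.mulVec v) = ε * (star v ⬝ᵥ M.mulVec u) := by
  have hM' : ∀ i j, (starRingEnd ℂ) (M i j) = ε * M j i := by
    intro i j
    have := congrFun (congrFun hM j) i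
    simpa [Matrix.conjTranspose_apply] using this
  simp only [dotProduct, Matrix.mulVec, Pi.star_apply, map_sum, _root_.map_mul, hM',
    Finset.mul_sum]
  rw [Finset.sum_comm]
  refine Finset.sum_congr rfl fun i _ => Finset.sum_congr rfl fun j _ => ?_
  simp only [Complex.star_def, Complex.conj_conj]
  ring

private theorem quad_dotEig {n : ℕ} (M D K : Matrix (Fin n) (Fin n) ℂ) (μ : ℂ) (u v : Fin n → ℂ)
    (h : (μ ^ 2 • M + μ • D + K).mulVec v = 0) :
    μ ^ 2 * (star u ⬝ᵥ M.mulVec v) + μ * (star u ⬝ᵥ D.mulVec v)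
      + star u ⬝ᵥ K.mulVec v = 0 := by
  have := congrArg (fun w => star u ⬝ᵥ w) h
  simpa [Matrix.add_mulVec, Matrix.smul_mulVec, dotProduct_add,
    dotProduct_smul, smul_eq_mul] using this

private theorem quad_entry {n : ℕ} (x xt : Fin n → ℂ) (A : Matrix (Fin n) (Fin n) ℂ)
    (X₀ : Matrix (Fin n) (Fin 2) ℂ) (hX₀ : X₀ = Matrix.of fun i => ![x i, xt i]) :
    X₀ᴴ * A * X₀ = !![star x ⬝ᵥ A.mulVec x, star x ⬝ᵥ A.mulVec xt;
                     star xt ⬝ᵥ A.mulVec x, star xt ⬝ᵥ A.mulVec xt] := by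
  ext i j
  fin_cases i <;> fin_cases j <;>
    · simp only [hX₀, Matrix.mul_apply, Matrix.conjTranspose_apply, Matrix.of_apply,
        dotProduct, Matrix.mulVec, Pi.star_apply, Finset.mul_sum, Finset.sum_mul,
        Matrix.cons_val_zero, Matrix.cons_val_one, Matrix.head_cons,
        Matrix.cons_val', Matrix.empty_val', Matrix.cons_val_fin_one, Fin.isValue,
        Fin.mk_zero, Fin.mk_one]
      rw [Finset.sum_comm]
      exact Finset.sum_congr rfl fun i _ => Finset.sum_congr rfl fun j _ => by ring

/-- For eigenpairs `(λ₀, x₀)` and `(ε₁ε₂·conj(λ₀), x̃₀)` of a quadratic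
matrix polynomial with `(*, ε₁, ε₂)`-structure, with `λ₀ ≠ ε₁ε₂·conj(λ₀)`, setting
`X₀ = [x₀ x̃₀]`, `Λ₀ = diag(λ₀, ε₁ε₂·conj(λ₀))` and
`s₀ = 2ε₁ε₂·conj(λ₀)·(x₀ᴴ M x̃₀) + x₀ᴴ D x̃₀`, one has
`X₀ᴴ M X₀ Λ₀ + ε₁ε₂ Λ₀ᴴ X₀ᴴ M X₀ + X₀ᴴ D X₀ = [[0, s₀],[ε₂ conj(s₀), 0]]`. -/
theorem quadratic_star_structure_block_form
    {n : ℕ} (ε₁ ε₂ : ℂ) (hε₁ : ε₁ = 1 ∨ ε₁ = -1) (hε₂ : ε₂ = 1 ∨ ε₂ = -1)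
    (M D K : Matrix (Fin n) (Fin n) ℂ)
    (hM : Mᴴ = ε₁ • M) (hD : Dᴴ = ε₂ • D) (hK : Kᴴ = ε₁ • K)
    (lam : ℂ) (x xt : Fin n → ℂ) (hx : x ≠ 0) (hxt : xt ≠ 0)
    (hlam : lam ≠ ε₁ * ε₂ * (starRingEnd ℂ) lam)
    (h₁ : (lam ^ 2 • M + lam • D + K).mulVec x = 0)
    (h₂ : ((ε₁ * ε₂ * (starRingEnd ℂ) lam) ^ 2 • M
            + (ε₁ * ε₂ * (starRingEnd ℂ) lam) • D + K).mulVec xt = 0)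
    (X₀ : Matrix (Fin n) (Fin 2) ℂ) (hX₀ : X₀ = Matrix.of fun i => ![x i, xt i])
    (Λ₀ : Matrix (Fin 2) (Fin 2) ℂ) (hΛ₀ : Λ₀ = !![lam, 0; 0, ε₁ * ε₂ * (starRingEnd ℂ) lam])
    (s₀ : ℂ)
    (hs₀ : s₀ = 2 * ε₁ * ε₂ * (starRingEnd ℂ) lam * (star x ⬝ᵥ M.mulVec xt)
              + star x ⬝ᵥ D.mulVec xt) :
    X₀ᴴ * M * X₀ * Λ₀ + (ε₁ * ε₂) • (Λ₀ᴴ * (X₀ᴴ * M * X₀)) + X₀ᴴ * D * X₀ =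
      !![0, s₀; ε₂ * (starRingEnd ℂ) s₀, 0] := by
  have he1c : (starRingEnd ℂ) ε₁ = ε₁ := by rcases hε₁ with h | h <;> simp [h]
  have he2c : (starRingEnd ℂ) ε₂ = ε₂ := by rcases hε₂ with h | h <;> simp [h]
  have he1 : ε₁ * ε₁ = 1 := by rcases hε₁ with h | h <;> norm_num [h]
  have he2 : ε₂ * ε₂ = 1 := by rcases hε₂ with h | h <;> norm_num [h]
  set cl := (starRingEnd ℂ) lam with hcl
  set μ := ε₁ * ε₂ * cl with hμ
  set a := star x ⬝ᵥ M.mulVec x with ha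
  set b := star xt ⬝ᵥ M.mulVec xt with hb
  set c := star x ⬝ᵥ M.mulVec xt with hc
  set c' := star xt ⬝ᵥ M.mulVec x with hc'
  set d := star x ⬝ᵥ D.mulVec x with hd
  set d' := star xt ⬝ᵥ D.mulVec xt with hd'
  set d2 := star x ⬝ᵥ D.mulVec xt with hd2
  set d2' := star xt ⬝ᵥ D.mulVec x with hd2'
  set k := star x ⬝ᵥ K.mulVec x with hk
  set k' := star xt ⬝ᵥ K.mulVec xt with hk'
  -- eigen scalar equations
  have E1 : lam ^ 2 * a + lam * d + k = 0 := quad_dotEig M D K lam x x h₁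
  have E2 : μ ^ 2 * b + μ * d' + k' = 0 := quad_dotEig M D K μ xt xt h₂
  -- conjugated versions
  have F1 : cl ^ 2 * (ε₁ * a) + cl * (ε₂ * d) + ε₁ * k = 0 := by
    have := congrArg (starRingEnd ℂ) E1
    have q1 : (starRingEnd ℂ) a = ε₁ * a := quad_key M ε₁ hM x x
    have q2 : (starRingEnd ℂ) d = ε₂ * d := quad_key D ε₂ hD x x
    have q3 : (starRingEnd ℂ) k = ε₁ * k := quad_key K ε₁ hK x x
    simpa [map_add, _root_.map_mul, map_pow, q1, q2, q3, ← hcl] using this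
  have hμc : (starRingEnd ℂ) μ = ε₁ * ε₂ * lam := by
    simp [hμ, hcl, _root_.map_mul, he1c, he2c, Complex.conj_conj]
  have F2 : (ε₁ * ε₂ * lam) ^ 2 * (ε₁ * b) + (ε₁ * ε₂ * lam) * (ε₂ * d') + ε₁ * k' = 0 := by
    have := congrArg (starRingEnd ℂ) E2
    have q1 : (starRingEnd ℂ) b = ε₁ * b := quad_key M ε₁ hM xt xt
    have q2 : (starRingEnd ℂ) d' = ε₂ * d' := quad_key D ε₂ hD xt xt
    have q3 : (starRingEnd ℂ) k' = ε₁ * k' := quad_key K ε₁ hK xt xt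
    simpa [map_add, _root_.map_mul, map_pow, q1, q2, q3, hμc] using this
  have F1' : μ ^ 2 * a + μ * d + k = 0 := by
    linear_combination ε₁ * F1 + cl ^ 2 * ε₁ * ε₁ * a * he2 - k * he1
  have F2' : lam ^ 2 * b + lam * d' + k' = 0 := by
    linear_combination ε₁ * F2 + (-(lam ^ 2 * b * ε₁ ^ 4) - lam * d' * ε₁ ^ 2) * he2
      + (-(lam ^ 2 * b * (ε₁ ^ 2 + 1)) - lam * d' - k') * he1
  have hne : lam - μ ≠ 0 := sub_ne_zero.mpr hlam
  -- diagonal identities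
  have G1 : (lam + μ) * a + d = 0 := by
    have hsub : (lam - μ) * ((lam + μ) * a + d) = 0 := by linear_combination E1 - F1'
    rcases mul_eq_zero.mp hsub with h | h
    · exact absurd h hne
    · exact h
  have G2 : (lam + μ) * b + d' = 0 := by
    have hsub : (lam - μ) * ((lam + μ) * b + d') = 0 := by linear_combination F2' - E2
    rcases mul_eq_zero.mp hsub with h | h
    · exact absurd h hne
    · exact h
  -- conjugates of off-diagonal entries
  have hcc : (starRingEnd ℂ) c = ε₁ * c' := quad_key M ε₁ hM x xt
  have hdd : (starRingEnd ℂ) d2 = ε₂ * d2' := quad_key D ε₂ hD x xt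
  have hcs : (starRingEnd ℂ) s₀ = 2 * ε₁ * ε₂ * lam * (ε₁ * c') + ε₂ * d2' := by
    have h := congrArg (starRingEnd ℂ) hs₀
    simp only [map_add, _root_.map_mul, map_ofNat, he1c, he2c, hcc, hdd, hcl,
      Complex.conj_conj] at h
    exact h
  -- reduce to 2×2 computation
  rw [quad_entry x xt M X₀ hX₀, quad_entry x xt D X₀ hX₀, hΛ₀, ← ha, ← hb, ← hc, ← hc',
    ← hd, ← hd', ← hd2, ← hd2']
  ext i j
  fin_cases i <;> fin_cases j <;>
    simp only [Matrix.mul_apply, Fin.sum_univ_two, Matrix.conjTranspose_apply,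
      Matrix.smul_apply, Matrix.add_apply, Matrix.of_apply, Matrix.cons_val',
      Matrix.cons_val_zero, Matrix.cons_val_one, Matrix.head_cons, Matrix.empty_val',
      Matrix.cons_val_fin_one, Matrix.head_fin_const, Fin.isValue, Fin.mk_zero, Fin.mk_one,
      smul_eq_mul, Complex.star_def, hμc, map_zero, Complex.conj_conj, ← hcl]
  · linear_combination G1
  · linear_combination -hs₀
  · linear_combination -ε₂ * hcs - (lam * c' * ε₁ * ε₁ + d2') * he2 - lam * c' * he1
  · linear_combination G2 + lam * b * ε₁ * ε₁ * he2 + lam * b * he1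
end

section
/- In the setting of the no-spillover perturbation theorem: let ε₁, ε₂ ∈ {1, −1}, let M, D, K ∈ ℂ^{n×n} satisfy M* = ε₁M, D* = ε₂D, K* = ε₁K, let (X_c, Λ_c) ∈ ℂ^{n×p₁} × ℂ^{p₁×p₁} be an invariant pair of Q(λ) = λ²M + λD + K, let Λ_a ∈ ℂ^{p₁×p₁}, assume R := X_c* M X_c Λ_a + ε₁ε₂ Λ_c* X_c* M X_c + X_c* D X_c is invertible, and set Z := (Λ_c − Λ_a)R⁻¹, S := X_c* M X_c Λ_c + ε₁ε₂ Λ_c* X_c* M X_c + X_c* D X_c. If S Λ_a = ε₁ (S Λ_a)*, then the perturbations ΔM := M X_c Z X_c* M, ΔD := ε₁ε₂ M X_c Z Λ_c* X_c* M + M X_c Z X_c* D + M X_c Λ_c Z X_c* M + D X_c Z X_c* M, ΔK := ε₁ε₂ M X_c Λ_c Z Λ_c* X_c* M + M X_c Λ_c Z X_c* D + ε₁ε₂ D X_c Z Λ_c* X_c* M + D X_c Z X_c* D satisfy ΔM* = ε₁ΔM, ΔD* = ε₂ΔD, ΔK* = ε₁ΔK; i.e. the perturbed polynomial Q_Δ(λ)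 = λ²(M+ΔM) + λ(D+ΔD) + (K+ΔK) again has (*,ε₁,ε₂)-structure. -/
open Matrix

private lemma aux_comb {n p₁ : ℕ} (ε₁ ε₂ : ℂ)
    (hε₁ : ε₁ = 1 ∨ ε₁ = -1) (hε₂ : ε₂ = 1 ∨ ε₂ = -1)
    (M D K : Matrix (Fin n) (Fin n) ℂ)
    (hM : Mᴴ = ε₁ • M) (hD : Dᴴ = ε₂ • D) (hK : Kᴴ = ε₁ • K)
    (Xc : Matrix (Fin n) (Fin p₁) ℂ) (Λc Λa : Matrix (Fin p₁) (Fin p₁) ℂ)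
    (R : Matrix (Fin p₁) (Fin p₁) ℂ)
    (hRdef : R = Xcᴴ * M * Xc * Λa + (ε₁ * ε₂) • (Λcᴴ * (Xcᴴ * M * Xc)) + Xcᴴ * D * Xc)
    (S : Matrix (Fin p₁) (Fin p₁) ℂ)
    (hSdef : S = Xcᴴ * M * Xc * Λc + (ε₁ * ε₂) • (Λcᴴ * (Xcᴴ * M * Xc)) + Xcᴴ * D * Xc) :
    Rᴴ * (Λc - Λa) - ε₁ • ((Λcᴴ - Λaᴴ) * R)
    = (-ε₂) • (S * Λa - ε₁ • (S * Λa)ᴴ)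
      + ε₂ • (Xcᴴ * M * Xc * Λc ^ 2 + Xcᴴ * D * Xc * Λc + Xcᴴ * K * Xc)
      - (ε₁ * ε₂) • (Xcᴴ * M * Xc * Λc ^ 2 + Xcᴴ * D * Xc * Λc + Xcᴴ * K * Xc)ᴴ := by
  subst hRdef hSdef
  rcases hε₁ with rfl | rfl <;> rcases hε₂ with rfl | rfl <;>
  · simp only [conjTranspose_add, conjTranspose_mul, conjTranspose_smul, conjTranspose_conjTranspose,
      conjTranspose_pow, conjTranspose_neg, conjTranspose_sub, pow_two, hM, hD, hK, _root_.map_mul,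
      Complex.star_def, _root_.map_one, map_neg,
      Matrix.mul_smul, Matrix.smul_mul, smul_smul, smul_add, smul_sub, neg_smul, one_smul,
      mul_add, add_mul, sub_mul, mul_sub, mul_assoc, Matrix.mul_assoc, Matrix.mul_add,
      Matrix.add_mul, Matrix.sub_mul, Matrix.mul_sub, mul_one, one_mul, neg_neg, neg_mul,
      mul_neg, Matrix.neg_mul, Matrix.mul_neg, smul_neg, neg_add, neg_sub]
    module

/-- In the no-spillover setting, if `S Λ_a = ε₁ (S Λ_a)ᴴ` then the
perturbations `ΔM, ΔD, ΔK` have `(*, ε₁, ε₂)`-structure, i.e. the perturbed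
polynomial stays in `𝕈ₙ(*, ε₁, ε₂)`. -/
theorem structured_quadratic_no_spillover_structure_preserving
    {n p₁ : ℕ} (ε₁ ε₂ : ℂ)
    (hε₁ : ε₁ = 1 ∨ ε₁ = -1) (hε₂ : ε₂ = 1 ∨ ε₂ = -1)
    (M D K : Matrix (Fin n) (Fin n) ℂ)
    (hM : Mᴴ = ε₁ • M) (hD : Dᴴ = ε₂ • D) (hK : Kᴴ = ε₁ • K)
    (Xc : Matrix (Fin n) (Fin p₁) ℂ) (Λc Λa : Matrix (Fin p₁) (Fin p₁) ℂ)
    (hc : M * Xc * Λc ^ 2 + D * Xc * Λc + K * Xc = 0)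
    (R : Matrix (Fin p₁) (Fin p₁) ℂ)
    (hRdef : R = Xcᴴ * M * Xc * Λa + (ε₁ * ε₂) • (Λcᴴ * (Xcᴴ * M * Xc)) + Xcᴴ * D * Xc)
    (hR : IsUnit R.det)
    (Z : Matrix (Fin p₁) (Fin p₁) ℂ) (hZ : Z = (Λc - Λa) * R⁻¹)
    (S : Matrix (Fin p₁) (Fin p₁) ℂ)
    (hSdef : S = Xcᴴ * M * Xc * Λc + (ε₁ * ε₂) • (Λcᴴ * (Xcᴴ * M * Xc)) + Xcᴴ * D * Xc)
    (hSΛa : S * Λa = ε₁ • (S * Λa)ᴴ)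
    (ΔM ΔD ΔK : Matrix (Fin n) (Fin n) ℂ)
    (hΔM : ΔM = M * Xc * Z * Xcᴴ * M)
    (hΔD : ΔD = (ε₁ * ε₂) • (M * Xc * Z * Λcᴴ * Xcᴴ * M) + M * Xc * Z * Xcᴴ * D
              + M * Xc * Λc * Z * Xcᴴ * M + D * Xc * Z * Xcᴴ * M)
    (hΔK : ΔK = (ε₁ * ε₂) • (M * Xc * Λc * Z * Λcᴴ * Xcᴴ * M) + M * Xc * Λc * Z * Xcᴴ * D
              + (ε₁ * ε₂) • (D * Xc * Z * Λcᴴ * Xcᴴ * M) + D * Xc * Z * Xcᴴ * D) :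
    ΔMᴴ = ε₁ • ΔM ∧ ΔDᴴ = ε₂ • ΔD ∧ ΔKᴴ = ε₁ • ΔK := by
  have h11 : ε₁ * ε₁ = 1 := by rcases hε₁ with rfl | rfl <;> norm_num
  have hP : Xcᴴ * M * Xc * Λc ^ 2 + Xcᴴ * D * Xc * Λc + Xcᴴ * K * Xc = 0 := by
    have h := congrArg (fun T => Xcᴴ * T) hc
    simpa [Matrix.mul_add, Matrix.mul_assoc] using h
  have hC : S * Λa - ε₁ • (S * Λa)ᴴ = 0 := sub_eq_zero_of_eq hSΛa
  have comb := aux_comb ε₁ ε₂ hε₁ hε₂ M D K hM hD hK Xc Λc Λa R hRdef S hSdef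
  rw [hC, hP] at comb
  have key : Rᴴ * (Λc - Λa) = ε₁ • ((Λcᴴ - Λaᴴ) * R) := by
    have := sub_eq_zero.mp (by simpa using comb)
    simpa using this
  have key' : (Λcᴴ - Λaᴴ) * R = ε₁ • (Rᴴ * (Λc - Λa)) := by
    rw [key, smul_smul, h11, one_smul]
  have hRH : IsUnit Rᴴ.det := by rw [Matrix.det_conjTranspose]; exact hR.star
  have hZs : Zᴴ = ε₁ • Z := by
    rw [hZ]
    calc ((Λc - Λa) * R⁻¹)ᴴ = (Rᴴ)⁻¹ * (Λcᴴ - Λaᴴ) := by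
          rw [conjTranspose_mul, conjTranspose_sub, Matrix.conjTranspose_nonsing_inv]
      _ = (Rᴴ)⁻¹ * (Λcᴴ - Λaᴴ) * (R * R⁻¹) := by
          rw [Matrix.mul_nonsing_inv R hR, Matrix.mul_one]
      _ = (Rᴴ)⁻¹ * ((Λcᴴ - Λaᴴ) * R) * R⁻¹ := by
          rw [Matrix.mul_assoc, Matrix.mul_assoc, Matrix.mul_assoc]
      _ = (Rᴴ)⁻¹ * (ε₁ • (Rᴴ * (Λc - Λa))) * R⁻¹ := by rw [key']
      _ = ε₁ • ((Rᴴ)⁻¹ * Rᴴ * ((Λc - Λa) * R⁻¹)) := by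
          simp only [Matrix.mul_smul, Matrix.smul_mul, Matrix.mul_assoc]
      _ = ε₁ • ((Λc - Λa) * R⁻¹) := by
          rw [Matrix.nonsing_inv_mul _ hRH, Matrix.one_mul]
  subst hΔM hΔD hΔK
  refine ⟨?_, ?_, ?_⟩ <;>
  · rcases hε₁ with rfl | rfl <;> rcases hε₂ with rfl | rfl <;>
    · simp only [conjTranspose_add, conjTranspose_mul, conjTranspose_smul,
        conjTranspose_conjTranspose, conjTranspose_neg, conjTranspose_sub, hM, hD, hK, hZs,
        _root_.map_mul, Complex.star_def, _root_.map_one, map_neg,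
        Matrix.mul_smul, Matrix.smul_mul, smul_smul, smul_add, smul_sub, neg_smul, one_smul,
        mul_add, add_mul, sub_mul, mul_sub, mul_assoc, Matrix.mul_assoc, Matrix.mul_add,
        Matrix.add_mul, Matrix.sub_mul, Matrix.mul_sub, mul_one, one_mul, neg_neg, neg_mul,
        mul_neg, Matrix.neg_mul, Matrix.mul_neg, smul_neg, neg_add, neg_sub]
      try module
end

section
/- Let ε₁, ε₂ ∈ {1, −1}, let S, Λ_c, Λ_a ∈ ℂ^{p×p} and G ∈ ℂ^{p×p} satisfy S* = ε₂S and SΛ_c = ε₁ε₂Λ_c*S, let R := S − G(Λ_c − Λ_a) with G* = ε₁G (G playing the role of X_c*MX_c, so that R = G Λ_a + ε₁ε₂Λ_c*G + (S − GΛ_c − ε₁ε₂Λ_c*G)), and assume R is invertible. Set Z := (Λ_c − Λ_a)R⁻¹. Then Z = ε₁Z* if and only if SΛ_a = ε₁(SΛ_a)*. -/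
open Matrix

/-- Key symmetry equivalence: with `Sᴴ = ε₂S`, `SΛ_c = ε₁ε₂Λ_cᴴS`,
`Gᴴ = ε₁G`, `R = S − G(Λ_c − Λ_a)` invertible and `Z = (Λ_c − Λ_a)R⁻¹`, one has
`Z = ε₁Zᴴ` iff `SΛ_a = ε₁(SΛ_a)ᴴ`. -/
theorem structure_preservation_symmetry_equivalence
    {p : ℕ} (ε₁ ε₂ : ℂ)
    (hε₁ : ε₁ = 1 ∨ ε₁ = -1) (hε₂ : ε₂ = 1 ∨ ε₂ = -1)
    (S Λc Λa G : Matrix (Fin p) (Fin p) ℂ)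
    (hS : Sᴴ = ε₂ • S) (hSΛc : S * Λc = (ε₁ * ε₂) • (Λcᴴ * S))
    (hG : Gᴴ = ε₁ • G)
    (R : Matrix (Fin p) (Fin p) ℂ) (hRdef : R = S - G * (Λc - Λa))
    (hR : IsUnit R.det)
    (Z : Matrix (Fin p) (Fin p) ℂ) (hZ : Z = (Λc - Λa) * R⁻¹) :
    Z = ε₁ • Zᴴ ↔ S * Λa = ε₁ • (S * Λa)ᴴ := by
  have hε₁2 : ε₁ * ε₁ = 1 := by rcases hε₁ with h | h <;> simp [h]
  have hε₂2 : ε₂ * ε₂ = 1 := by rcases hε₂ with h | h <;> simp [h]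
  have hε₂0 : ε₂ ≠ 0 := by rcases hε₂ with h | h <;> simp [h]
  set D := Λc - Λa with hD
  have hRH : IsUnit Rᴴ.det := by
    rw [det_conjTranspose]; exact hR.star
  -- conjugate transpose of R
  have hRHdef : Rᴴ = ε₂ • S - ε₁ • (Dᴴ * G) := by
    rw [hRdef]
    simp [conjTranspose_sub, conjTranspose_mul, hS, hG, Matrix.mul_smul]
  have heq : ε₂ * (ε₁ * ε₂) = ε₁ := by
    rw [mul_comm ε₁ ε₂, ← mul_assoc, hε₂2, one_mul]
  -- key algebraic identity
  have key : Rᴴ * D - ε₁ • (Dᴴ * R) = ε₁ • (Λaᴴ * S) - ε₂ • (S * Λa) := by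
    rw [hRHdef, hRdef, hD]
    simp only [conjTranspose_sub, Matrix.sub_mul, Matrix.mul_sub, Matrix.smul_mul,
      Matrix.mul_smul, smul_sub, smul_smul, hSΛc, Matrix.mul_assoc]
    rw [heq]
    abel
  -- first equivalence
  have step1 : Z = ε₁ • Zᴴ ↔ Rᴴ * D = ε₁ • (Dᴴ * R) := by
    have hZR : Z * R = D := by
      rw [hZ, Matrix.mul_assoc, Matrix.nonsing_inv_mul _ hR, Matrix.mul_one]
    have hZH : Rᴴ * Zᴴ = Dᴴ := by
      rw [hZ, conjTranspose_mul, conjTranspose_nonsing_inv, ← Matrix.mul_assoc,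
        Matrix.mul_nonsing_inv _ hRH, Matrix.one_mul]
    constructor
    · intro h
      calc Rᴴ * D = Rᴴ * Z * R := by rw [← hZR, Matrix.mul_assoc]
        _ = Rᴴ * (ε₁ • Zᴴ) * R := by rw [← h]
        _ = ε₁ • (Rᴴ * Zᴴ * R) := by simp [Matrix.mul_smul, Matrix.smul_mul]
        _ = ε₁ • (Dᴴ * R) := by rw [hZH]
    · intro h
      have := congrArg (fun X => (Rᴴ)⁻¹ * X * R⁻¹) h
      calc Z = Z * R * R⁻¹ := by
              rw [Matrix.mul_assoc, Matrix.mul_nonsing_inv _ hR, Matrix.mul_one]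
        _ = (Rᴴ)⁻¹ * (Rᴴ * Z * R) * R⁻¹ := by
              rw [← Matrix.mul_assoc, ← Matrix.mul_assoc,
                Matrix.nonsing_inv_mul _ hRH, Matrix.one_mul]
        _ = (Rᴴ)⁻¹ * (Rᴴ * (Z * R)) * R⁻¹ := by rw [Matrix.mul_assoc Rᴴ]
        _ = (Rᴴ)⁻¹ * (ε₁ • (Dᴴ * R)) * R⁻¹ := by rw [hZR, h]
        _ = ε₁ • ((Rᴴ)⁻¹ * Dᴴ * (R * R⁻¹)) := by
              simp [Matrix.mul_smul, Matrix.smul_mul, Matrix.mul_assoc]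
        _ = ε₁ • Zᴴ := by
              rw [Matrix.mul_nonsing_inv _ hR, Matrix.mul_one, hZ,
                conjTranspose_mul, conjTranspose_nonsing_inv]
    -- done
  rw [step1]
  have step2 : Rᴴ * D = ε₁ • (Dᴴ * R) ↔ ε₂ • (S * Λa) = ε₁ • (Λaᴴ * S) := by
    rw [← sub_eq_zero, key, sub_eq_zero, eq_comm]
  rw [step2]
  have hSΛaH : (S * Λa)ᴴ = ε₂ • (Λaᴴ * S) := by
    rw [conjTranspose_mul, hS, Matrix.mul_smul]
  rw [hSΛaH, smul_smul]
  constructor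
  · intro h
    have h2 := congrArg (fun X => ε₂ • X) h
    simp only [smul_smul] at h2
    rw [hε₂2, one_smul, mul_comm ε₂ ε₁] at h2
    exact h2
  · intro h
    rw [h, smul_smul, heq]
end

section
/- Let ε₁, ε₂ ∈ {1, −1}, let M, D, K ∈ ℂ^{n×n} satisfy M* = ε₁M, D* = ε₂D, K* = ε₁K, and let (X_c, Λ_c) ∈ ℂ^{n×p₁} × ℂ^{p₁×p₁} and (X_f, Λ_f) ∈ ℂ^{n×p₂} × ℂ^{p₂×p₂} be invariant pairs of Q(λ) = λ²M + λD + K. Let Λ_a ∈ ℂ^{p₁×p₁} and let P ∈ ℂ^{p₁×p₁} be invertible such that R := X_c* M X_c PΛ_aP⁻¹ + ε₁ε₂ Λ_c* X_c* M X_c + X_c* D X_c is invertible, and assume the spectra of Λ_c and ε₁ε₂Λ_f* are disjoint. Set Z := (Λ_c − PΛ_aP⁻¹)R⁻¹ and define ΔM := M X_c Z X_c* M, ΔD := ε₁ε₂ M X_c Z Λ_c* X_c* M + M X_c Z X_c* D + M X_c Λ_c Z X_c* M + D X_c Z X_c* M, ΔK := ε₁ε₂ M X_c Λ_c Z Λ_c*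 X_c* M + M X_c Λ_c Z X_c* D + ε₁ε₂ D X_c Z Λ_c* X_c* M + D X_c Z X_c* D. Then (X_cP, Λ_a) and (X_f, Λ_f) are invariant pairs of Q_Δ(λ) = λ²(M+ΔM) + λ(D+ΔD) + (K+ΔK); moreover, if S PΛ_aP⁻¹ = ε₁(S PΛ_aP⁻¹)* where S := X_c* M X_c Λ_c + ε₁ε₂ Λ_c* X_c* M X_c + X_c* D X_c, then ΔM* = ε₁ΔM, ΔD* = ε₂ΔD, ΔK* = ε₁ΔK. -/
open Matrix

open Polynomial


lemma aux_eval_charpoly {m : ℕ} (A : Matrix (Fin m) (Fin m) ℂ) (μ : ℂ) :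
    (A.charpoly).eval μ = (μ • (1 : Matrix (Fin m) (Fin m) ℂ) - A).det := by
  rw [Matrix.charpoly, _root_.eval_det, _root_.matPolyEquiv_eval_eq_map]
  congr 1
  ext i j
  by_cases h : i = j <;>
    simp [h, Matrix.charmatrix_apply_eq, Matrix.charmatrix_apply_ne, Matrix.one_apply,
      Matrix.smul_apply]

lemma aux_sylvester {q p : ℕ} (A : Matrix (Fin q) (Fin q) ℂ) (B : Matrix (Fin p) (Fin p) ℂ)
    (U : Matrix (Fin q) (Fin p) ℂ) (h : A * U = U * B)
    (hd : ∀ μ : ℂ, ¬ ((μ • (1 : Matrix (Fin p) (Fin p) ℂ) - B).det = 0 ∧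
      (μ • (1 : Matrix (Fin q) (Fin q) ℂ) - A).det = 0)) :
    U = 0 := by
  have hpow : ∀ k : ℕ, A ^ k * U = U * B ^ k := by
    intro k; induction k with
    | zero => simp
    | succ k ih =>
      rw [pow_succ, pow_succ, Matrix.mul_assoc, h, ← Matrix.mul_assoc, ih, Matrix.mul_assoc]
  have hpoly : ∀ f : ℂ[X], (aeval A f) * U = U * (aeval B f) := by
    intro f
    induction f using Polynomial.induction_on' with
    | add f g hf hg => rw [map_add, map_add, Matrix.add_mul, Matrix.mul_add, hf, hg]
    | monomial k a =>
      simp only [aeval_monomial, Algebra.algebraMap_eq_smul_one, Matrix.smul_mul,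
        Matrix.mul_smul, Matrix.one_mul, hpow k]
  set f := B.charpoly with hf
  have key : (aeval A f) * U = 0 := by
    rw [hpoly, Matrix.aeval_self_charpoly, Matrix.mul_zero]
  set L := f.roots.toList with hL
  have hsplit : f = (L.map fun a => X - C a).prod := by
    have h1 := (IsAlgClosed.splits f).eq_prod_roots_of_monic
      (Matrix.charpoly_monic B)
    rw [h1]
    rw [← Multiset.coe_toList f.roots, ← hL, Multiset.map_coe, Multiset.prod_coe]
  have haev : aeval A f = (L.map fun r => A - r • 1).prod := by
    conv_lhs => rw [hsplit]
    rw [map_list_prod, List.map_map]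
    congr 1
    apply List.map_congr_left
    intro r _
    simp [Algebra.algebraMap_eq_smul_one]
  have hdet : IsUnit (aeval A f).det := by
    rw [haev, ← Matrix.coe_detMonoidHom, map_list_prod, List.map_map]
    rw [isUnit_iff_ne_zero]
    apply List.prod_ne_zero
    simp only [List.mem_map, Function.comp_apply, Matrix.coe_detMonoidHom]
    rintro ⟨r, hr, hr0⟩
    have hBdet : (r • (1 : Matrix (Fin p) (Fin p) ℂ) - B).det = 0 := by
      rw [← aux_eval_charpoly]
      exact Polynomial.isRoot_of_mem_roots (Multiset.mem_toList.mp hr)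
    have hAdet : (r • (1 : Matrix (Fin q) (Fin q) ℂ) - A).det ≠ 0 := fun h0 => hd r ⟨hBdet, h0⟩
    apply hAdet
    have hneg : A - r • 1 = -(r • (1 : Matrix (Fin q) (Fin q) ℂ) - A) := by rw [neg_sub]
    rw [hneg, Matrix.det_neg] at hr0
    symm at hr0
    rcases mul_eq_zero.mp hr0.symm with h1 | h2
    · exact absurd h1 (pow_ne_zero _ (by norm_num))
    · exact h2
  calc U = 1 * U := (Matrix.one_mul U).symm
    _ = ((aeval A f)⁻¹ * (aeval A f)) * U := by rw [Matrix.nonsing_inv_mul _ hdet]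
    _ = (aeval A f)⁻¹ * ((aeval A f) * U) := by rw [Matrix.mul_assoc]
    _ = 0 := by rw [key, Matrix.mul_zero]


set_option maxHeartbeats 1600000 in
/-- No-spillover perturbation with change of eigenvectors
`X_a = X_c P` (Theorem 3.6): the stated perturbations make `(X_c P, Λ_a)` and
`(X_f, Λ_f)` invariant pairs of the perturbed polynomial; moreover, if
`S PΛ_aP⁻¹ = ε₁ (S PΛ_aP⁻¹)ᴴ` then the perturbations have `(*, ε₁, ε₂)`-structure. -/
theorem structured_quadratic_no_spillover_with_P
    {n p₁ p₂ : ℕ} (ε₁ ε₂ : ℂ)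
    (hε₁ : ε₁ = 1 ∨ ε₁ = -1) (hε₂ : ε₂ = 1 ∨ ε₂ = -1)
    (M D K : Matrix (Fin n) (Fin n) ℂ)
    (hM : Mᴴ = ε₁ • M) (hD : Dᴴ = ε₂ • D) (hK : Kᴴ = ε₁ • K)
    (Xc : Matrix (Fin n) (Fin p₁) ℂ) (Λc : Matrix (Fin p₁) (Fin p₁) ℂ)
    (Xf : Matrix (Fin n) (Fin p₂) ℂ) (Λf : Matrix (Fin p₂) (Fin p₂) ℂ)
    (hc : M * Xc * Λc ^ 2 + D * Xc * Λc + K * Xc = 0)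
    (hf : M * Xf * Λf ^ 2 + D * Xf * Λf + K * Xf = 0)
    (Λa : Matrix (Fin p₁) (Fin p₁) ℂ)
    (P : Matrix (Fin p₁) (Fin p₁) ℂ) (hP : IsUnit P.det)
    (hdisj : ∀ μ : ℂ, ¬ ((μ • (1 : Matrix (Fin p₁) (Fin p₁) ℂ) - Λc).det = 0 ∧
      (μ • (1 : Matrix (Fin p₂) (Fin p₂) ℂ) - (ε₁ * ε₂) • Λfᴴ).det = 0))
    (R : Matrix (Fin p₁) (Fin p₁) ℂ)
    (hRdef : R = Xcᴴ * M * Xc * (P * Λa * P⁻¹)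
              + (ε₁ * ε₂) • (Λcᴴ * (Xcᴴ * M * Xc)) + Xcᴴ * D * Xc)
    (hR : IsUnit R.det)
    (Z : Matrix (Fin p₁) (Fin p₁) ℂ) (hZ : Z = (Λc - P * Λa * P⁻¹) * R⁻¹)
    (ΔM ΔD ΔK : Matrix (Fin n) (Fin n) ℂ)
    (hΔM : ΔM = M * Xc * Z * Xcᴴ * M)
    (hΔD : ΔD = (ε₁ * ε₂) • (M * Xc * Z * Λcᴴ * Xcᴴ * M) + M * Xc * Z * Xcᴴ * D
              + M * Xc * Λc * Z * Xcᴴ * M + D * Xc * Z * Xcᴴ * M)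
    (hΔK : ΔK = (ε₁ * ε₂) • (M * Xc * Λc * Z * Λcᴴ * Xcᴴ * M) + M * Xc * Λc * Z * Xcᴴ * D
              + (ε₁ * ε₂) • (D * Xc * Z * Λcᴴ * Xcᴴ * M) + D * Xc * Z * Xcᴴ * D)
    (S : Matrix (Fin p₁) (Fin p₁) ℂ)
    (hSdef : S = Xcᴴ * M * Xc * Λc + (ε₁ * ε₂) • (Λcᴴ * (Xcᴴ * M * Xc)) + Xcᴴ * D * Xc) :
    (M + ΔM) * (Xc * P) * Λa ^ 2 + (D + ΔD) * (Xc * P) * Λa + (K + ΔK) * (Xc * P) = 0 ∧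
    (M + ΔM) * Xf * Λf ^ 2 + (D + ΔD) * Xf * Λf + (K + ΔK) * Xf = 0 ∧
    (S * (P * Λa * P⁻¹) = ε₁ • (S * (P * Λa * P⁻¹))ᴴ →
      ΔMᴴ = ε₁ • ΔM ∧ ΔDᴴ = ε₂ • ΔD ∧ ΔKᴴ = ε₁ • ΔK) := by
  have h11 : ε₁ * ε₁ = 1 := by rcases hε₁ with rfl | rfl <;> norm_num
  have h22 : ε₂ * ε₂ = 1 := by rcases hε₂ with rfl | rfl <;> norm_num
  have hs1' : star ε₁ = ε₁ := by rcases hε₁ with rfl | rfl <;> simp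
  have hs2' : star ε₂ = ε₂ := by rcases hε₂ with rfl | rfl <;> simp
  have he : (ε₁ * ε₂) * (ε₁ * ε₂) = 1 := by rw [mul_mul_mul_comm, h11, h22, one_mul]
  set W : Matrix (Fin p₁) (Fin p₁) ℂ := P * Λa * P⁻¹ with hW
  have hPi : P⁻¹ * P = 1 := Matrix.nonsing_inv_mul P hP
  have hZR : Z * R = Λc - W := by
    rw [hZ, Matrix.mul_assoc, Matrix.nonsing_inv_mul R hR, Matrix.mul_one]
  have hWP : W * P = P * Λa := by
    rw [hW, Matrix.mul_assoc, hPi, Matrix.mul_one]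
  have hWPa : W * (P * Λa) = P * (Λa * Λa) := by
    rw [← Matrix.mul_assoc, hWP, Matrix.mul_assoc]
  -- Part 1
  have key1 : (M + ΔM) * Xc * (W * W) + (D + ΔD) * Xc * W + (K + ΔK) * Xc = 0 := by
    have comb : (M + ΔM) * Xc * (W * W) + (D + ΔD) * Xc * W + (K + ΔK) * Xc
        = (M * Xc * Λc ^ 2 + D * Xc * Λc + K * Xc)
          + (M * Xc * ((Z * R) * W) - M * Xc * ((Λc - W) * W))
          + (M * Xc * (Λc * (Z * R)) - M * Xc * (Λc * (Λc - W)))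
          + (D * Xc * (Z * R) - D * Xc * (Λc - W)) := by
      rw [hRdef, hΔM, hΔD, hΔK]
      simp only [Matrix.add_mul, Matrix.mul_add, Matrix.mul_sub, Matrix.sub_mul,
        Matrix.smul_mul, Matrix.mul_smul, Matrix.mul_assoc, pow_two]
      abel
    rw [comb, hZR, hc]
    abel
  have hgoal1 : (M + ΔM) * (Xc * P) * Λa ^ 2 + (D + ΔD) * (Xc * P) * Λa + (K + ΔK) * (Xc * P)
      = ((M + ΔM) * Xc * (W * W) + (D + ΔD) * Xc * W + (K + ΔK) * Xc) * P := by
    simp only [Matrix.add_mul, Matrix.mul_assoc, hWP, hWPa, pow_two]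
  refine ⟨by rw [hgoal1, key1, Matrix.zero_mul], ?_, ?_⟩
  · -- Part 2
    have ha : Λcᴴ * (Λcᴴ * (Xcᴴ * (M * Xf))) + (ε₁ * ε₂) • (Λcᴴ * (Xcᴴ * (D * Xf)))
        + Xcᴴ * (K * Xf) = 0 := by
      have h0 := congrArg (fun A : Matrix (Fin n) (Fin p₁) ℂ => ε₁ • (Aᴴ * Xf)) hc
      simpa only [conjTranspose_add, conjTranspose_mul, conjTranspose_pow, conjTranspose_zero,
        hM, hD, hK, Matrix.smul_mul, Matrix.mul_smul, Matrix.add_mul, Matrix.mul_assoc,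
        smul_smul, smul_add, h11, one_smul, pow_two, Matrix.zero_mul, smul_zero] using h0
    have hb : Xcᴴ * (M * (Xf * (Λf * Λf))) + Xcᴴ * (D * (Xf * Λf)) + Xcᴴ * (K * Xf) = 0 := by
      have h0 := congrArg (fun A : Matrix (Fin n) (Fin p₂) ℂ => Xcᴴ * A) hf
      simpa only [Matrix.mul_add, Matrix.mul_assoc, pow_two, Matrix.mul_zero] using h0
    set T : Matrix (Fin p₁) (Fin p₂) ℂ :=
      (ε₁ * ε₂) • (Λcᴴ * (Xcᴴ * (M * Xf))) + Xcᴴ * (M * (Xf * Λf)) + Xcᴴ * (D * Xf) with hTdef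
    have hTe : (ε₁ * ε₂) • (Λcᴴ * T) = T * Λf := by
      have comb2 : (ε₁ * ε₂) • (Λcᴴ * T) - T * Λf
          = (Λcᴴ * (Λcᴴ * (Xcᴴ * (M * Xf))) + (ε₁ * ε₂) • (Λcᴴ * (Xcᴴ * (D * Xf)))
              + Xcᴴ * (K * Xf))
            - (Xcᴴ * (M * (Xf * (Λf * Λf))) + Xcᴴ * (D * (Xf * Λf)) + Xcᴴ * (K * Xf)) := by
        rw [hTdef]
        simp only [Matrix.add_mul, Matrix.mul_add, Matrix.smul_mul, Matrix.mul_smul,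
          smul_add, smul_sub, smul_smul, he, one_smul, Matrix.mul_assoc]
        abel
      rw [ha, hb, sub_zero] at comb2
      exact sub_eq_zero.mp comb2
    have hUeq : ((ε₁ * ε₂) • Λfᴴ) * Tᴴ = Tᴴ * Λc := by
      have h0 := congrArg conjTranspose hTe
      simp only [conjTranspose_smul, conjTranspose_mul, conjTranspose_conjTranspose,
        star_mul', hs1', hs2', mul_comm ε₂ ε₁] at h0
      rw [Matrix.smul_mul, ← h0, smul_smul, he, one_smul]
    have hU0 : Tᴴ = 0 := aux_sylvester _ _ _ hUeq hdisj
    have hT0 : T = 0 := by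
      have h0 := congrArg conjTranspose hU0
      simpa using h0
    have key2 : ΔM * Xf * Λf ^ 2 + ΔD * Xf * Λf + ΔK * Xf
        = M * Xc * (Z * (T * Λf)) + M * Xc * (Λc * (Z * T)) + D * Xc * (Z * T) := by
      rw [hΔM, hΔD, hΔK, hTdef]
      simp only [Matrix.add_mul, Matrix.mul_add, Matrix.smul_mul, Matrix.mul_smul,
        smul_add, Matrix.mul_assoc, pow_two]
      abel
    have goal2 : (M + ΔM) * Xf * Λf ^ 2 + (D + ΔD) * Xf * Λf + (K + ΔK) * Xf
        = (M * Xf * Λf ^ 2 + D * Xf * Λf + K * Xf)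
          + (ΔM * Xf * Λf ^ 2 + ΔD * Xf * Λf + ΔK * Xf) := by
      simp only [Matrix.add_mul]; abel
    rw [goal2, hf, key2, hT0]
    simp
  · -- Part 3
    intro hSW
    have idA : Λcᴴ * (Λcᴴ * (Xcᴴ * (M * Xc))) + (ε₁ * ε₂) • (Λcᴴ * (Xcᴴ * (D * Xc)))
        + Xcᴴ * (K * Xc) = 0 := by
      have h0 := congrArg (fun A : Matrix (Fin n) (Fin p₁) ℂ => ε₁ • (Aᴴ * Xc)) hc
      simpa only [conjTranspose_add, conjTranspose_mul, conjTranspose_pow, conjTranspose_zero,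
        hM, hD, hK, Matrix.smul_mul, Matrix.mul_smul, Matrix.add_mul, Matrix.mul_assoc,
        smul_smul, smul_add, h11, one_smul, pow_two, Matrix.zero_mul, smul_zero] using h0
    have idB : Xcᴴ * (M * (Xc * (Λc * Λc))) + Xcᴴ * (D * (Xc * Λc)) + Xcᴴ * (K * Xc) = 0 := by
      have h0 := congrArg (fun A : Matrix (Fin n) (Fin p₁) ℂ => Xcᴴ * A) hc
      simpa only [Matrix.mul_add, Matrix.mul_assoc, pow_two, Matrix.mul_zero] using h0
    have hRH : Rᴴ = ε₁ • (Wᴴ * (Xcᴴ * (M * Xc))) + ε₂ • (Xcᴴ * (M * (Xc * Λc)))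
        + ε₂ • (Xcᴴ * (D * Xc)) := by
      rw [hRdef]
      simp only [conjTranspose_add, conjTranspose_mul, conjTranspose_smul,
        conjTranspose_conjTranspose, hM, hD, star_mul', hs1', hs2',
        Matrix.smul_mul, Matrix.mul_smul, smul_smul, smul_add, Matrix.mul_assoc]
      match_scalars <;> rcases hε₁ with rfl | rfl <;> rcases hε₂ with rfl | rfl <;> norm_num
    have hyp2 : Xcᴴ * (M * (Xc * (Λc * W))) + (ε₁ * ε₂) • (Λcᴴ * (Xcᴴ * (M * (Xc * W))))
          + Xcᴴ * (D * (Xc * W))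
        = Wᴴ * (Λcᴴ * (Xcᴴ * (M * Xc))) + (ε₁ * ε₂) • (Wᴴ * (Xcᴴ * (M * (Xc * Λc))))
          + (ε₁ * ε₂) • (Wᴴ * (Xcᴴ * (D * Xc))) := by
      calc Xcᴴ * (M * (Xc * (Λc * W))) + (ε₁ * ε₂) • (Λcᴴ * (Xcᴴ * (M * (Xc * W))))
            + Xcᴴ * (D * (Xc * W)) = S * W := by
              rw [hSdef]
              simp only [Matrix.add_mul, Matrix.smul_mul, Matrix.mul_assoc]
        _ = ε₁ • (S * W)ᴴ := hSW
        _ = _ := by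
              rw [hSdef]
              simp only [conjTranspose_add, conjTranspose_mul, conjTranspose_smul,
                conjTranspose_conjTranspose, hM, hD, star_mul', hs1', hs2',
                Matrix.smul_mul, Matrix.mul_smul, smul_smul, smul_add, Matrix.mul_add,
                Matrix.mul_assoc]
              match_scalars <;> rcases hε₁ with rfl | rfl <;> rcases hε₂ with rfl | rfl <;>
                norm_num
    have key3 : (Λcᴴ - Wᴴ) * R = ε₁ • (Rᴴ * (Λc - W)) := by
      have comb3 : (Λcᴴ - Wᴴ) * R - ε₁ • (Rᴴ * (Λc - W))
          = (ε₁ * ε₂) • (Λcᴴ * (Λcᴴ * (Xcᴴ * (M * Xc))) + (ε₁ * ε₂) • (Λcᴴ * (Xcᴴ * (D * Xc)))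
              + Xcᴴ * (K * Xc))
            - (ε₁ * ε₂) • (Xcᴴ * (M * (Xc * (Λc * Λc))) + Xcᴴ * (D * (Xc * Λc)) + Xcᴴ * (K * Xc))
            + (ε₁ * ε₂) • ((Xcᴴ * (M * (Xc * (Λc * W))) + (ε₁ * ε₂) • (Λcᴴ * (Xcᴴ * (M * (Xc * W))))
                + Xcᴴ * (D * (Xc * W)))
              - (Wᴴ * (Λcᴴ * (Xcᴴ * (M * Xc))) + (ε₁ * ε₂) • (Wᴴ * (Xcᴴ * (M * (Xc * Λc))))
                + (ε₁ * ε₂) • (Wᴴ * (Xcᴴ * (D * Xc))))) := by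
        rw [hRH, hRdef]
        simp only [Matrix.add_mul, Matrix.mul_add, Matrix.sub_mul, Matrix.mul_sub,
          Matrix.smul_mul, Matrix.mul_smul, smul_add, smul_sub, smul_smul, Matrix.mul_assoc]
        match_scalars <;> rcases hε₁ with rfl | rfl <;> rcases hε₂ with rfl | rfl <;> norm_num
      rw [idA, idB, sub_eq_zero.mpr hyp2] at comb3
      simp only [smul_zero, sub_zero, add_zero, sub_self, zero_add] at comb3
      exact sub_eq_zero.mp comb3
    have hRHdet : IsUnit Rᴴ.det := by
      rw [Matrix.det_conjTranspose]; exact hR.star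
    have hZH : Zᴴ = ε₁ • Z := by
      calc Zᴴ = (Rᴴ)⁻¹ * (Λcᴴ - Wᴴ) := by
            rw [hZ, conjTranspose_mul, conjTranspose_sub, Matrix.conjTranspose_nonsing_inv]
        _ = (Rᴴ)⁻¹ * (((Λcᴴ - Wᴴ) * R) * R⁻¹) := by
            rw [Matrix.mul_assoc, Matrix.mul_nonsing_inv R hR, Matrix.mul_one]
        _ = (Rᴴ)⁻¹ * ((ε₁ • (Rᴴ * (Λc - W))) * R⁻¹) := by rw [key3]
        _ = ε₁ • (((Rᴴ)⁻¹ * Rᴴ) * ((Λc - W) * R⁻¹)) := by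
            simp only [Matrix.smul_mul, Matrix.mul_smul, Matrix.mul_assoc]
        _ = ε₁ • Z := by rw [Matrix.nonsing_inv_mul _ hRHdet, Matrix.one_mul, hZ]
    refine ⟨?_, ?_, ?_⟩
    · rw [hΔM]
      simp only [conjTranspose_mul, conjTranspose_smul, conjTranspose_add,
        conjTranspose_conjTranspose, hM, hD, hZH, star_mul', hs1', hs2',
        Matrix.smul_mul, Matrix.mul_smul, smul_smul, smul_add, Matrix.mul_assoc]
      match_scalars <;> rcases hε₁ with rfl | rfl <;> rcases hε₂ with rfl | rfl <;> norm_num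
    · rw [hΔD]
      simp only [conjTranspose_mul, conjTranspose_smul, conjTranspose_add,
        conjTranspose_conjTranspose, hM, hD, hZH, star_mul', hs1', hs2',
        Matrix.smul_mul, Matrix.mul_smul, smul_smul, smul_add, Matrix.mul_assoc]
      match_scalars <;> rcases hε₁ with rfl | rfl <;> rcases hε₂ with rfl | rfl <;> norm_num
    · rw [hΔK]
      simp only [conjTranspose_mul, conjTranspose_smul, conjTranspose_add,
        conjTranspose_conjTranspose, hM, hD, hZH, star_mul', hs1', hs2',
        Matrix.smul_mul, Matrix.mul_smul, smul_smul, smul_add, Matrix.mul_assoc]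
      match_scalars <;> rcases hε₁ with rfl | rfl <;> rcases hε₂ with rfl | rfl <;> norm_num
end

section
/- Let ε₁, ε₂ ∈ {1, −1} and let δ ∈ ℂ satisfy δ² = ε₁ (i.e. δ = 1 if ε₁ = 1, δ = i if ε₁ = −1). Let α ∈ ℂ, let μ ∈ ℂ with μ ≠ ε₁ε₂·conj(μ), let a, b be nonzero real numbers, set S := [[0, α],[ε₂·conj(α), 0]] ∈ ℂ^{2×2}, Λ_a := diag(μ, ε₁ε₂·conj(μ)), and P := [[δ·α·a, (μ − ε₁ε₂·conj(μ))⁻¹·b],[−ε₁·(μ − ε₁ε₂·conj(μ))⁻¹·a, δ·b·conj(α)]]. If P is invertible, then S P Λ_a P⁻¹ = ε₁ (S P Λ_a P⁻¹)*, where * denotes conjugate transpose. -/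
open Matrix

/-- The 2×2 computation at the heart of Corollary 4.1: with
`S = [[0, α],[ε₂·conj(α), 0]]`, `Λ_a = diag(μ, ε₁ε₂·conj(μ))` and the stated `P`
(when invertible), one has `S P Λ_a P⁻¹ = ε₁ (S P Λ_a P⁻¹)ᴴ`. -/
theorem two_by_two_structure_preserving_P
    (ε₁ ε₂ : ℂ) (hε₁ : ε₁ = 1 ∨ ε₁ = -1) (hε₂ : ε₂ = 1 ∨ ε₂ = -1)
    (δ : ℂ) (hδ : δ ^ 2 = ε₁)
    (α μ : ℂ) (hμ : μ ≠ ε₁ * ε₂ * (starRingEnd ℂ) μ)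
    (a b : ℝ) (ha : a ≠ 0) (hb : b ≠ 0)
    (S : Matrix (Fin 2) (Fin 2) ℂ) (hS : S = !![0, α; ε₂ * (starRingEnd ℂ) α, 0])
    (Λa : Matrix (Fin 2) (Fin 2) ℂ)
    (hΛa : Λa = !![μ, 0; 0, ε₁ * ε₂ * (starRingEnd ℂ) μ])
    (P : Matrix (Fin 2) (Fin 2) ℂ)
    (hPdef : P = !![δ * α * (a : ℂ), (μ - ε₁ * ε₂ * (starRingEnd ℂ) μ)⁻¹ * (b : ℂ);
                    -ε₁ * (μ - ε₁ * ε₂ * (starRingEnd ℂ) μ)⁻¹ * (a : ℂ),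
                    δ * (b : ℂ) * (starRingEnd ℂ) α])
    (hP : IsUnit P.det) :
    S * P * Λa * P⁻¹ = ε₁ • (S * P * Λa * P⁻¹)ᴴ := by
  have hPd : IsUnit Pᴴ.det := by
    rw [Matrix.det_conjTranspose]; exact (isUnit_star).mpr hP
  have h1 : (Pᴴ)⁻¹ * Pᴴ = 1 := Matrix.nonsing_inv_mul _ hPd
  have h2 : P * P⁻¹ = 1 := Matrix.mul_nonsing_inv _ hP
  have h3 : (P⁻¹)ᴴ = (Pᴴ)⁻¹ := Matrix.conjTranspose_nonsing_inv P
  have hSH : Sᴴ = ε₂ • S := by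
    subst hS
    rcases hε₂ with h | h <;> subst h <;>
      ext i j <;> fin_cases i <;> fin_cases j <;> simp
  have e1 : ε₁ * ε₁ = 1 := by rcases hε₁ with h | h <;> rw [h] <;> norm_num
  have hε₁c : (starRingEnd ℂ) ε₁ = ε₁ := by rcases hε₁ with h | h <;> rw [h] <;> simp
  have hε₂c : (starRingEnd ℂ) ε₂ = ε₂ := by rcases hε₂ with h | h <;> rw [h] <;> simp
  have hδc : (starRingEnd ℂ) δ = ε₁ * δ := by
    have hδ1 : δ * δ = ε₁ := by rw [← pow_two]; exact hδ
    have hδ2 : (starRingEnd ℂ) δ * (starRingEnd ℂ) δ = ε₁ := by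
      rw [← _root_.map_mul, hδ1, hε₁c]
    have hn : δ * (starRingEnd ℂ) δ = 1 := by
      rw [Complex.mul_conj]
      have h4 : (Complex.normSq δ : ℂ) * (Complex.normSq δ : ℂ) = 1 := by
        push_cast
        calc ((Complex.normSq δ : ℂ)) * (Complex.normSq δ : ℂ)
            = (δ * (starRingEnd ℂ) δ) * (δ * (starRingEnd ℂ) δ) := by
              rw [Complex.mul_conj]
          _ = (δ * δ) * ((starRingEnd ℂ) δ * (starRingEnd ℂ) δ) := by ring
          _ = ε₁ * ε₁ := by rw [hδ1, hδ2]
          _ = 1 := e1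
      have h5 : (Complex.normSq δ : ℝ) = 1 ∨ (Complex.normSq δ : ℝ) = -1 := by
        have := h4
        have h6 : ((Complex.normSq δ : ℝ) : ℂ) * ((Complex.normSq δ : ℝ) : ℂ) = 1 := h4
        have h7 : (Complex.normSq δ : ℝ) * (Complex.normSq δ : ℝ) = 1 := by
          exact_mod_cast h6
        rcases mul_self_eq_one_iff.mp h7 with h | h
        exacts [Or.inl h, Or.inr h]
      rcases h5 with h | h
      · rw [h]; norm_num
      · exfalso; have := Complex.normSq_nonneg δ; rw [h] at this; linarith
    linear_combination (-(starRingEnd ℂ) δ) * hn + δ * hδ2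
  have hxc : (starRingEnd ℂ) ((μ - ε₁ * ε₂ * (starRingEnd ℂ) μ)⁻¹) =
      -(ε₁ * ε₂) * (μ - ε₁ * ε₂ * (starRingEnd ℂ) μ)⁻¹ := by
    rw [map_inv₀, map_sub, _root_.map_mul, _root_.map_mul, hε₁c, hε₂c, Complex.conj_conj]
    have hcc : (starRingEnd ℂ) μ - ε₁ * ε₂ * μ =
        -(ε₁ * ε₂) * (μ - ε₁ * ε₂ * (starRingEnd ℂ) μ) := by
      have e2 : ε₂ * ε₂ = 1 := by rcases hε₂ with h | h <;> rw [h] <;> norm_num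
      linear_combination (-((starRingEnd ℂ) μ) * (ε₂ * ε₂)) * e1 + (-(starRingEnd ℂ) μ) * e2
    rw [hcc, mul_inv, inv_neg]
    have e12 : (ε₁ * ε₂) * (ε₁ * ε₂) = 1 := by
      rcases hε₁ with h | h <;> rcases hε₂ with h' | h' <;> rw [h, h'] <;> norm_num
    rw [inv_eq_of_mul_eq_one_right e12]
  have hkey : Pᴴ * S * P * Λa = (ε₁ * ε₂) • (Λaᴴ * (Pᴴ * S * P)) := by
    subst hS hΛa hPdef
    rcases hε₁ with h | h <;> subst h <;> rcases hε₂ with h | h <;> subst h <;>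
      norm_num at hδc hxc ⊢ <;>
      (ext i j <;> fin_cases i <;> fin_cases j <;>
        simp [Matrix.mul_apply, Fin.sum_univ_two, Matrix.smul_apply,
          _root_.map_mul, map_neg, Complex.conj_conj, Complex.conj_ofReal,
          hδc, hxc, hε₁c, hε₂c] <;>
        ring)
  calc S * P * Λa * P⁻¹
      = (Pᴴ)⁻¹ * Pᴴ * S * P * Λa * P⁻¹ := by rw [h1, one_mul]
    _ = (Pᴴ)⁻¹ * (Pᴴ * S * P * Λa) * P⁻¹ := by
        simp only [Matrix.mul_assoc]
    _ = (Pᴴ)⁻¹ * ((ε₁ * ε₂) • (Λaᴴ * (Pᴴ * S * P))) * P⁻¹ := by rw [hkey]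
    _ = (ε₁ * ε₂) • ((Pᴴ)⁻¹ * Λaᴴ * Pᴴ * S * (P * P⁻¹)) := by
        simp only [Matrix.mul_smul, Matrix.smul_mul, Matrix.mul_assoc]
    _ = (ε₁ * ε₂) • ((Pᴴ)⁻¹ * Λaᴴ * Pᴴ * S) := by rw [h2, Matrix.mul_one]
    _ = ε₁ • (S * P * Λa * P⁻¹)ᴴ := by
        simp only [Matrix.conjTranspose_mul, h3, hSH, Matrix.mul_smul, smul_smul]
        simp only [Matrix.mul_assoc]
end
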